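/- arXiv:2212.10208 — 7 statements merged into one kernel-verified Lean document; each statement's English description precedes it below -/
import Mathlib

section
/- Let L be a finite lattice and S = [S_⊥, S_⊤] an interval of L. Then S is nested in L (i.e., there exist x,y ∈ S∥, a ∈ S↑, v ∈ S↓ with y = x ∨ v, x = y ∧ a, y ≰ a, v ≰ x) if and only if S_⊥ and S_⊤ are elements of a crown of order 3 in L. -/
open Classical

variable {L : Type*}

/-- The interval relation `θ_S` for the single interval `S = [u,v]`. -/
def irel [Preorder L] (u v : L) (x y : L) : Prop :=
  x = y ∨ (x ∈ Set.Icc u v ∧ y ∈ Set.Icc u v)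

/-- `θ_S` as a setoid. -/
def irelSetoid [Preorder L] (u v : L) : Setoid L where
  r := irel u v
  iseqv := by
    constructor
    · intro x; exact Or.inl rfl
    · rintro x y (rfl | ⟨hx, hy⟩)
      · exact Or.inl rfl
      · exact Or.inr ⟨hy, hx⟩
    · rintro x y z (rfl | ⟨hx, hy⟩) h
      · exact h
      · rcases h with rfl | ⟨hy', hz⟩
        · exact Or.inr ⟨hx, hy⟩
        · exact Or.inr ⟨hx, hz⟩

/-- `x_θ`, the least element of the class of `x`. -/
noncomputable def ilow [Preorder L] (u v : L) (x : L) : L :=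
  if x ∈ Set.Icc u v then u else x

/-- `x^θ`, the greatest element of the class of `x`. -/
noncomputable def ihigh [Preorder L] (u v : L) (x : L) : L :=
  if x ∈ Set.Icc u v then v else x

/-- `S↓`, the elements outside `S` strictly below some element of `S`. -/
def iSdown [Preorder L] (u v : L) : Set L :=
  {z | z ∉ Set.Icc u v ∧ ∃ s ∈ Set.Icc u v, z < s}

/-- `S↑`, the elements outside `S` strictly above some element of `S`. -/
def iSupSet [Preorder L] (u v : L) : Set L :=
  {z | z ∉ Set.Icc u v ∧ ∃ s ∈ Set.Icc u v, s < z}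

/-- `S∥`, the elements outside `S` incomparable to all of `S`. -/
def iSpar [Preorder L] (u v : L) : Set L :=
  {z | z ∉ Set.Icc u v ∧ ∀ s ∈ Set.Icc u v, ¬ s < z ∧ ¬ z < s}

/-- The relation `≤_θ` on representatives. -/
def ile [Preorder L] (u v : L) (x y : L) : Prop :=
  ilow u v x ≤ ihigh u v y ∨ (x ∈ iSdown u v ∧ y ∈ iSupSet u v)

/-- The induced relation `≤_θ` on the factor set `L/θ`. -/
def iLeQ [Preorder L] (u v : L) (a b : Quotient (irelSetoid u v)) : Prop :=
  ∃ x y : L, a = Quotient.mk (irelSetoid u v) x ∧ b = Quotient.mk (irelSetoid u v) y ∧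
    ile u v x y

/-- `S` is a nested interval. -/
def iNested [Lattice L] (u v : L) : Prop :=
  ∃ x y a w : L, x ∈ iSpar u v ∧ y ∈ iSpar u v ∧ a ∈ iSupSet u v ∧ w ∈ iSdown u v ∧
    y = x ⊔ w ∧ x = y ⊓ a ∧ ¬ y ≤ a ∧ ¬ w ≤ x


section Helpers

lemma mem_iSpar_of [Preorder L] {a b z : L} (_hab : a ≤ b) (h1 : ¬ a ≤ z) (h2 : ¬ z ≤ b) :
    z ∈ iSpar a b := by
  refine ⟨fun hz => h1 hz.1, fun s hs => ⟨fun hlt => h1 (hs.1.trans hlt.le),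
    fun hlt => h2 (hlt.le.trans hs.2)⟩⟩

lemma iSpar_facts [PartialOrder L] {a b z : L} (hab : a ≤ b) (hz : z ∈ iSpar a b) :
    ¬ a ≤ z ∧ ¬ z ≤ b ∧ ¬ b ≤ z ∧ ¬ z ≤ a := by
  obtain ⟨hni, hall⟩ := hz
  have ha := hall a ⟨le_refl a, hab⟩
  have hb := hall b ⟨hab, le_refl b⟩
  refine ⟨fun hle => ?_, fun hle => ?_, fun hle => ?_, fun hle => ?_⟩
  · rcases hle.lt_or_eq with hlt | rfl
    · exact ha.1 hlt
    · exact hni ⟨le_refl _, hab⟩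
  · rcases hle.lt_or_eq with hlt | rfl
    · exact hb.2 hlt
    · exact hni ⟨hab, le_refl _⟩
  · rcases hle.lt_or_eq with hlt | rfl
    · exact hb.1 hlt
    · exact hni ⟨hab, le_refl _⟩
  · rcases hle.lt_or_eq with hlt | rfl
    · exact ha.2 hlt
    · exact hni ⟨le_refl _, hab⟩

lemma mem_iSupSet_of [Preorder L] {a b z : L} (hab : a ≤ b) (h1 : a < z) (h2 : ¬ z ≤ b) :
    z ∈ iSupSet a b :=
  ⟨fun hz => h2 hz.2, a, ⟨le_refl a, hab⟩, h1⟩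

lemma mem_iSdown_of [Preorder L] {a b z : L} (hab : a ≤ b) (h1 : z < b) (h2 : ¬ a ≤ z) :
    z ∈ iSdown a b :=
  ⟨fun hz => h2 hz.1, b, ⟨hab, le_refl b⟩, h1⟩

lemma iSupSet_facts [Preorder L] {a b z : L} (hz : z ∈ iSupSet a b) :
    a ≤ z ∧ ¬ z ≤ b := by
  obtain ⟨hni, s, hs, hlt⟩ := hz
  exact ⟨hs.1.trans hlt.le, fun hc => hni ⟨hs.1.trans hlt.le, hc⟩⟩

lemma iSdown_facts [Preorder L] {a b z : L} (hz : z ∈ iSdown a b) :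
    z ≤ b ∧ ¬ a ≤ z := by
  obtain ⟨hni, s, hs, hlt⟩ := hz
  exact ⟨hlt.le.trans hs.2, fun hc => hni ⟨hc, hlt.le.trans hs.2⟩⟩

lemma nested_of_crown_aux [Lattice L] {sb st x1 x2 y1 y2 : L}
    (h : sb ≤ st)
    (p11 : x1 ≤ y1) (p12 : x1 ≤ y2) (p22 : x2 ≤ y2) (p20 : x2 ≤ st)
    (p01 : sb ≤ y1)
    (n02 : ¬ sb ≤ y2) (n10 : ¬ x1 ≤ st) (n21 : ¬ x2 ≤ y1)
    (a02 : ¬ sb ≤ x2) (b02 : ¬ st ≤ y2) (b10 : ¬ y1 ≤ st) :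
    iNested sb st := by
  have hx1X : x1 ≤ (x1 ⊔ x2) ⊓ y1 := le_inf le_sup_left p11
  have hXy2 : (x1 ⊔ x2) ⊓ y1 ≤ y2 := inf_le_left.trans (sup_le p12 p22)
  refine ⟨(x1 ⊔ x2) ⊓ y1, x1 ⊔ x2, y1, x2, ?_, ?_, ?_, ?_, ?_, rfl, ?_, ?_⟩
  · exact mem_iSpar_of h (fun hc => n02 (hc.trans hXy2))
      (fun hc => n10 (hx1X.trans hc))
  · exact mem_iSpar_of h (fun hc => n02 (hc.trans (sup_le p12 p22)))
      (fun hc => n10 (le_sup_left.trans hc))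
  · refine mem_iSupSet_of h (lt_of_le_of_ne p01 fun e => b10 (e ▸ h)) b10
  · exact mem_iSdown_of h (lt_of_le_of_ne p20 fun e => b02 (e ▸ p22)) a02
  · exact le_antisymm (sup_le (hx1X.trans le_sup_left) le_sup_right)
      (sup_le inf_le_left le_sup_right)
  · exact fun hc => n21 (le_sup_right.trans hc)
  · exact fun hc => n21 (hc.trans inf_le_right)

end Helpers

/-- An interval `S = [S⊥, S⊤]` of a finite lattice is nested iff `S⊥` and
`S⊤` are elements of a crown of order 3. -/
theorem nested_iff_crown {L : Type*} [Lattice L] [Finite L] (sb st : L) (h : sb ≤ st) :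
    iNested sb st ↔
      ∃ x y : Fin 3 → L,
        (∀ i j, x i ≤ y j ↔ (j = i ∨ j = i + 1)) ∧
        (∀ i j, i ≠ j → ¬ x i ≤ x j) ∧
        (∀ i j, i ≠ j → ¬ y i ≤ y j) ∧
        (∀ i j, ¬ y i ≤ x j) ∧
        (∃ i, x i = sb ∧ y i = st) := by
  constructor
  · rintro ⟨x, y, a, w, hx, hy, ha, hw, hyxw, hxya, hya, hwx⟩
    obtain ⟨nsx, nxt, ntx, nxs⟩ := iSpar_facts h hx
    obtain ⟨nsy, nyt, nty, nys⟩ := iSpar_facts h hy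
    obtain ⟨sba, nat⟩ := iSupSet_facts ha
    obtain ⟨wst, nsw⟩ := iSdown_facts hw
    set P := y ⊓ st with hP
    set Q := x ⊔ sb with hQ
    have hxy : x ≤ y := hxya.le.trans inf_le_left
    have hxa : x ≤ a := hxya.le.trans inf_le_right
    have hwy : w ≤ y := le_sup_right.trans hyxw.ge
    have hwP : w ≤ P := le_inf hwy wst
    have hQa : Q ≤ a := sup_le hxa sba
    have key : ∀ {z : L}, P ≤ z → z ≤ Q → False := fun {z} h1 h2 =>
      hya (hyxw.le.trans ((sup_le_sup_left (hwP.trans (h1.trans h2)) x).trans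
        (sup_le hxa hQa)))
    refine ⟨![sb, x, P], ![st, Q, y], ?_, ?_, ?_, ?_, 0, rfl, rfl⟩
    · intro i j
      fin_cases i <;> fin_cases j
      · exact iff_of_true h (by decide)
      · exact iff_of_true le_sup_right (by decide)
      · exact iff_of_false nsy (by decide)
      · exact iff_of_false nxt (by decide)
      · exact iff_of_true le_sup_left (by decide)
      · exact iff_of_true hxy (by decide)
      · exact iff_of_true inf_le_right (by decide)
      · exact iff_of_false (fun hc => key le_rfl hc) (by decide)
      · exact iff_of_true inf_le_left (by decide)
    · intro i j hij
      fin_cases i <;> fin_cases j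
      · exact absurd rfl hij
      · exact nsx
      · exact fun hc => nsy (hc.trans inf_le_left)
      · exact fun hc => nxt (hc.trans h)
      · exact absurd rfl hij
      · exact fun hc => nxt (hc.trans inf_le_right)
      · exact fun hc => key hc le_sup_right
      · exact fun hc => hwx (hwP.trans hc)
      · exact absurd rfl hij
    · intro i j hij
      fin_cases i <;> fin_cases j
      · exact absurd rfl hij
      · exact fun hc => hwx (hwP.trans
          ((le_inf inf_le_left (inf_le_right.trans (hc.trans hQa))).trans hxya.ge))
      · exact nty
      · exact fun hc => nxt (le_sup_left.trans hc)
      · exact absurd rfl hij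
      · exact fun hc => nsy (le_sup_right.trans hc)
      · exact nyt
      · exact fun hc => hya (hc.trans hQa)
      · exact absurd rfl hij
    · intro i j
      fin_cases i <;> fin_cases j
      · exact fun hc => key (inf_le_right.trans hc) le_sup_right
      · exact ntx
      · exact fun hc => nty (hc.trans inf_le_left)
      · exact fun hc => nxt ((le_sup_left.trans hc).trans h)
      · exact fun hc => nsx (le_sup_right.trans hc)
      · exact fun hc => nxt (le_sup_left.trans (hc.trans inf_le_right))
      · exact fun hc => nyt (hc.trans h)
      · exact fun hc => hwx (hwy.trans hc)
      · exact fun hc => nyt (hc.trans inf_le_right)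
  · rintro ⟨x, y, h1, h2, h3, h4, i, hxi, hyi⟩
    fin_cases i <;> subst hxi <;> subst hyi
    · exact nested_of_crown_aux h
        ((h1 1 1).2 (by decide)) ((h1 1 2).2 (by decide)) ((h1 2 2).2 (by decide))
        ((h1 2 0).2 (by decide)) ((h1 0 1).2 (by decide))
        (fun hc => absurd ((h1 0 2).1 hc) (by decide))
        (fun hc => absurd ((h1 1 0).1 hc) (by decide))
        (fun hc => absurd ((h1 2 1).1 hc) (by decide))
        (h2 0 2 (by decide)) (h3 0 2 (by decide)) (h3 1 0 (by decide))
    · exact nested_of_crown_aux h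
        ((h1 2 2).2 (by decide)) ((h1 2 0).2 (by decide)) ((h1 0 0).2 (by decide))
        ((h1 0 1).2 (by decide)) ((h1 1 2).2 (by decide))
        (fun hc => absurd ((h1 1 0).1 hc) (by decide))
        (fun hc => absurd ((h1 2 1).1 hc) (by decide))
        (fun hc => absurd ((h1 0 2).1 hc) (by decide))
        (h2 1 0 (by decide)) (h3 1 0 (by decide)) (h3 2 1 (by decide))
    · exact nested_of_crown_aux h
        ((h1 0 0).2 (by decide)) ((h1 0 1).2 (by decide)) ((h1 1 1).2 (by decide))
        ((h1 1 2).2 (by decide)) ((h1 2 0).2 (by decide))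
        (fun hc => absurd ((h1 2 1).1 hc) (by decide))
        (fun hc => absurd ((h1 0 2).1 hc) (by decide))
        (fun hc => absurd ((h1 1 0).1 hc) (by decide))
        (h2 2 1 (by decide)) (h3 2 1 (by decide)) (h3 0 2 (by decide))
end

section
/- Let L be a finite lattice containing no crown of order 3 as a suborder. Then every interval of L is pure, and hence every 1-generated interval relation θ_S on L is lattice-generating, i.e., (L/θ_S, ≤_θ) is a lattice. -/
open Classical

variable {L : Type*}

/-!
For `u ≤ v`, the relation `≤_θ` on representatives is `x ≤ y ∨ (x ≤ v ∧ u ≤ y)`: `x` lies below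
`y` either in `L` or by passing through the collapsed interval. This is a preorder whose
antisymmetry classes are the classes of `θ_S`, and it is self-dual under `L ↦ Lᵒᵈ`,
`(u, v) ↦ (v, u)`, as is nestedness; so only joins have to be constructed. The join of the
classes of `x` and `y` is the class of `x ⊔ y`, except when `x ≤ v` and `y ≰ v`: then the common
upper bounds are those of `x ⊔ y` together with those of `u ⊔ y`, which form a principal set
exactly when `x ⊔ y` and `u ⊔ y` are comparable, and incomparability produces a nested
configuration. Finally a nested configuration `x, y, a, w` yields the crown `x, u, y ⊓ v` below
`y, x ⊔ u, v`.
-/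

theorem crown_incomparable_of_le_iff {P : Type*} [Preorder P] {x y : Fin 3 → P}
    (h : ∀ i j, x i ≤ y j ↔ (j = i ∨ j = i + 1)) :
    (∀ i j, i ≠ j → ¬ x i ≤ x j) ∧
      (∀ i j, i ≠ j → ¬ y i ≤ y j) ∧
      (∀ i j, ¬ y i ≤ x j) := by
  have hx_le_y (i : Fin 3) : x i ≤ y i := (h i i).2 (Or.inl rfl)
  have hx_le_y_succ (i : Fin 3) : x i ≤ y (i + 1) := (h i (i + 1)).2 (Or.inr rfl)
  have hx_pred_le_y (i : Fin 3) : x (i - 1) ≤ y i := by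
    simpa using hx_le_y_succ (i - 1)
  refine ⟨fun i j hij hle => ?_, fun i j hij hle => ?_, fun i j hle => ?_⟩
  · have h1 := (h i j).1 (hle.trans (hx_le_y j))
    have h2 := (h i (j + 1)).1 (hle.trans (hx_le_y_succ j))
    clear hle; revert i j; decide
  · have h1 := (h i j).1 ((hx_le_y i).trans hle)
    have h2 := (h (i - 1) j).1 ((hx_pred_le_y i).trans hle)
    clear hle; revert i j; decide
  · have h1 := (h i j).1 ((hx_le_y i).trans (hle.trans (hx_le_y j)))
    have h2 := (h (i - 1) j).1 ((hx_pred_le_y i).trans (hle.trans (hx_le_y j)))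
    have h3 := (h (i - 1) (j + 1)).1 ((hx_pred_le_y i).trans (hle.trans (hx_le_y_succ j)))
    clear hle; revert i j; decide

section Interval

open OrderDual

variable [Lattice L] {u v x y : L}

theorem mem_iSdown_iff (huv : u ≤ v) : x ∈ iSdown u v ↔ ¬ u ≤ x ∧ x ≤ v := by
  refine ⟨fun ⟨hx, s, hs, hxs⟩ => ?_, fun ⟨hux, hxv⟩ => ⟨fun hx => hux hx.1, v, ⟨huv, le_rfl⟩, ?_⟩⟩
  · have hxv := hxs.le.trans hs.2
    exact ⟨fun hux => hx ⟨hux, hxv⟩, hxv⟩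
  · exact hxv.lt_of_ne (by rintro rfl; exact hux huv)

theorem mem_iSupSet_iff (huv : u ≤ v) : x ∈ iSupSet u v ↔ u ≤ x ∧ ¬ x ≤ v := by
  refine ⟨fun ⟨hx, s, hs, hsx⟩ => ?_, fun ⟨hux, hxv⟩ => ⟨fun hx => hxv hx.2, u, ⟨le_rfl, huv⟩, ?_⟩⟩
  · have hux := hs.1.trans hsx.le
    exact ⟨hux, fun hxv => hx ⟨hux, hxv⟩⟩
  · exact hux.lt_of_ne (by rintro rfl; exact hxv huv)

theorem mem_iSpar_iff (huv : u ≤ v) : x ∈ iSpar u v ↔ ¬ u ≤ x ∧ ¬ x ≤ v := by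
  refine ⟨fun ⟨hx, hs⟩ => ⟨fun hux => ?_, fun hxv => ?_⟩,
    fun ⟨hux, hxv⟩ => ⟨fun hx => hux hx.1, fun s hs => ⟨fun hsx => hux (hs.1.trans hsx.le),
      fun hxs => hxv (hxs.le.trans hs.2)⟩⟩⟩
  · exact (hs u ⟨le_rfl, huv⟩).1 (hux.lt_of_ne (by rintro rfl; exact hx ⟨le_rfl, huv⟩))
  · exact (hs v ⟨huv, le_rfl⟩).2 (hxv.lt_of_ne (by rintro rfl; exact hx ⟨huv, le_rfl⟩))

theorem iNested_iff (huv : u ≤ v) :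
    iNested u v ↔ ∃ x y a w : L, (¬ u ≤ x ∧ ¬ x ≤ v) ∧ (¬ u ≤ y ∧ ¬ y ≤ v) ∧
      (u ≤ a ∧ ¬ a ≤ v) ∧ (¬ u ≤ w ∧ w ≤ v) ∧ y = x ⊔ w ∧ x = y ⊓ a ∧ ¬ y ≤ a ∧ ¬ w ≤ x := by
  simp only [iNested, mem_iSpar_iff huv, mem_iSupSet_iff huv, mem_iSdown_iff huv]

theorem iNested_of_toDual (huv : u ≤ v) (h : iNested (toDual v) (toDual u)) : iNested u v := by
  obtain ⟨x, y, a, w, hx, hy, ha, hw, hyxw, hxya, hya, hwx⟩ :=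
    (iNested_iff (u := toDual v) (v := toDual u) huv).1 h
  exact (iNested_iff huv).2 ⟨ofDual y, ofDual x, ofDual w, ofDual a, hy.symm, hx.symm, hw.symm,
    ha.symm, congrArg ofDual hxya, congrArg ofDual hyxw, hwx, hya⟩

theorem le_sup_or_le_sup_of_not_iNested (huv : u ≤ v) (hp : ¬ iNested u v) (hxv : x ≤ v)
    (hyv : ¬ y ≤ v) : u ≤ x ⊔ y ∨ x ≤ u ⊔ y := by
  by_contra! h
  obtain ⟨hu, hx⟩ := h
  have hy_le : y ≤ (x ⊔ y) ⊓ (u ⊔ y) := le_inf le_sup_right le_sup_right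
  have hsup_eq : x ⊔ y = (x ⊔ y) ⊓ (u ⊔ y) ⊔ x :=
    le_antisymm (sup_le le_sup_right (hy_le.trans le_sup_left)) (sup_le inf_le_left le_sup_left)
  exact hp ((iNested_iff huv).2 ⟨(x ⊔ y) ⊓ (u ⊔ y), x ⊔ y, u ⊔ y, x,
    ⟨fun h => hu (h.trans inf_le_left), fun h => hyv (hy_le.trans h)⟩,
    ⟨hu, fun h => hyv (le_sup_right.trans h)⟩,
    ⟨le_sup_left, fun h => hyv (le_sup_right.trans h)⟩,
    ⟨fun h => hu (h.trans le_sup_left), hxv⟩,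
    hsup_eq, rfl, fun h => hx (le_sup_left.trans h), fun h => hx (h.trans inf_le_right)⟩)

theorem iNested.exists_crown (huv : u ≤ v) (h : iNested u v) :
    ∃ x y : Fin 3 → L, ∀ i j, x i ≤ y j ↔ (j = i ∨ j = i + 1) := by
  obtain ⟨x, y, a, w, hx, hy, ha, hw, hyxw, hxya, hya, -⟩ := (iNested_iff huv).1 h
  have hxy : x ≤ y := hyxw ▸ le_sup_left
  have hxa : x ≤ a := hxya ▸ inf_le_right
  have hwy : w ≤ y := hyxw ▸ le_sup_right
  have hyv_xu : ¬ y ⊓ v ≤ x ⊔ u := fun h =>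
    hya (hyxw ▸ sup_le hxa ((le_inf hwy hw.2).trans (h.trans (sup_le hxa ha.1))))
  refine ⟨![x, u, y ⊓ v], ![y, x ⊔ u, v], fun i j => ?_⟩
  fin_cases i <;> fin_cases j <;> simp [hxy, huv, hx.2, hy.1, hyv_xu]

def collapseLE (u v x y : L) : Prop :=
  x ≤ y ∨ (x ≤ v ∧ u ≤ y)

theorem collapseLE_refl (u v x : L) : collapseLE u v x x := Or.inl le_rfl

theorem collapseLE_trans {z : L} (hxy : collapseLE u v x y) (hyz : collapseLE u v y z) :
    collapseLE u v x z := by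
  rcases hxy with hxy | ⟨hxv, huy⟩ <;> rcases hyz with hyz | ⟨hyv, huz⟩
  · exact Or.inl (hxy.trans hyz)
  · exact Or.inr ⟨hxy.trans hyv, huz⟩
  · exact Or.inr ⟨hxv, huy.trans hyz⟩
  · exact Or.inr ⟨hxv, huz⟩

theorem irel_of_collapseLE_of_collapseLE (hxy : collapseLE u v x y) (hyx : collapseLE u v y x) :
    irel u v x y := by
  rcases hxy with hxy | ⟨hxv, huy⟩ <;> rcases hyx with hyx | ⟨hyv, hux⟩
  · exact Or.inl (hxy.antisymm hyx)
  · exact Or.inr ⟨⟨hux, hxy.trans hyv⟩, ⟨hux.trans hxy, hyv⟩⟩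
  · exact Or.inr ⟨⟨huy.trans hyx, hxv⟩, ⟨huy, hyx.trans hxv⟩⟩
  · exact Or.inr ⟨⟨hux, hxv⟩, ⟨huy, hyv⟩⟩

theorem collapseLE_iff_of_mem_left (hx : x ∈ Set.Icc u v) : collapseLE u v x y ↔ u ≤ y :=
  ⟨fun h => h.elim hx.1.trans And.right, fun huy => Or.inr ⟨hx.2, huy⟩⟩

theorem collapseLE_iff_of_mem_right (hy : y ∈ Set.Icc u v) : collapseLE u v x y ↔ x ≤ v :=
  ⟨fun h => h.elim (·.trans hy.2) And.left, fun hxv => Or.inr ⟨hxv, hy.1⟩⟩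

theorem collapseLE_iff_of_le (hxv : x ≤ v) : collapseLE u v x y ↔ x ≤ y ∨ u ≤ y :=
  or_congr_right (and_iff_right hxv)

theorem collapseLE_iff_of_not_le (hxv : ¬ x ≤ v) : collapseLE u v x y ↔ x ≤ y :=
  or_iff_left fun h => hxv h.1

theorem collapseLE_congr {x' y' : L} (hx : irel u v x x') (hy : irel u v y y') :
    collapseLE u v x y ↔ collapseLE u v x' y' := by
  rcases hx with rfl | ⟨hx, hx'⟩
  · rcases hy with rfl | ⟨hy, hy'⟩
    · rfl
    · rw [collapseLE_iff_of_mem_right hy, collapseLE_iff_of_mem_right hy']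
  · rw [collapseLE_iff_of_mem_left hx, collapseLE_iff_of_mem_left hx']
    rcases hy with rfl | ⟨hy, hy'⟩
    · rfl
    · exact iff_of_true hy.1 hy'.1

theorem collapseLE_toDual :
    collapseLE (L := Lᵒᵈ) (toDual v) (toDual u) (toDual x) (toDual y) ↔ collapseLE u v y x :=
  or_congr_right and_comm

theorem exists_collapseLE_lub (hcomp : ∀ x y : L, x ≤ v → ¬ y ≤ v → u ≤ x ⊔ y ∨ x ≤ u ⊔ y)
    (x y : L) : ∃ z, ∀ d, collapseLE u v z d ↔ collapseLE u v x d ∧ collapseLE u v y d := by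
  have lub_of_le_of_not_le (x y : L) (hxv : x ≤ v) (hyv : ¬ y ≤ v) :
      ∃ z, ∀ d, collapseLE u v z d ↔ collapseLE u v x d ∧ collapseLE u v y d := by
    have hxyv : ¬ x ⊔ y ≤ v := fun h => hyv (le_sup_right.trans h)
    have huyv : ¬ u ⊔ y ≤ v := fun h => hyv (le_sup_right.trans h)
    simp only [collapseLE_iff_of_le hxv, collapseLE_iff_of_not_le hyv]
    rcases hcomp x y hxv hyv with h | h
    · refine ⟨u ⊔ y, fun d => ?_⟩
      rw [collapseLE_iff_of_not_le huyv, sup_le_iff]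
      exact ⟨fun ⟨hud, hyd⟩ => ⟨Or.inr hud, hyd⟩,
        fun ⟨hd, hyd⟩ => ⟨hd.elim (fun hxd => h.trans (sup_le hxd hyd)) id, hyd⟩⟩
    · refine ⟨x ⊔ y, fun d => ?_⟩
      rw [collapseLE_iff_of_not_le hxyv, sup_le_iff]
      exact ⟨fun ⟨hxd, hyd⟩ => ⟨Or.inl hxd, hyd⟩,
        fun ⟨hd, hyd⟩ => ⟨hd.elim id (fun hud => h.trans (sup_le hud hyd)), hyd⟩⟩
  by_cases hxv : x ≤ v <;> by_cases hyv : y ≤ v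
  · refine ⟨x ⊔ y, fun d => ?_⟩
    rw [collapseLE_iff_of_le (sup_le hxv hyv), collapseLE_iff_of_le hxv, collapseLE_iff_of_le hyv,
      sup_le_iff, and_or_right]
  · exact lub_of_le_of_not_le x y hxv hyv
  · obtain ⟨z, hz⟩ := lub_of_le_of_not_le y x hyv hxv
    exact ⟨z, fun d => (hz d).trans and_comm⟩
  · refine ⟨x ⊔ y, fun d => ?_⟩
    have hxyv : ¬ x ⊔ y ≤ v := fun h => hxv (le_sup_left.trans h)
    rw [collapseLE_iff_of_not_le hxyv, collapseLE_iff_of_not_le hxv, collapseLE_iff_of_not_le hyv,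
      sup_le_iff]

theorem exists_collapseLE_glb (huv : u ≤ v) (hp : ¬ iNested u v) (x y : L) :
    ∃ z, ∀ d, collapseLE u v d z ↔ collapseLE u v d x ∧ collapseLE u v d y := by
  have hp' : ¬ iNested (toDual v) (toDual u) := fun h => hp (iNested_of_toDual huv h)
  obtain ⟨z, hz⟩ := exists_collapseLE_lub
    (fun x y => le_sup_or_le_sup_of_not_iNested (u := toDual v) (v := toDual u) huv hp')
    (toDual x) (toDual y)
  exact ⟨ofDual z, fun d => collapseLE_toDual.symm.trans
    ((hz (toDual d)).trans (and_congr collapseLE_toDual collapseLE_toDual))⟩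

theorem ile_iff_collapseLE (huv : u ≤ v) : ile u v x y ↔ collapseLE u v x y := by
  rw [ile, ilow, ihigh, mem_iSdown_iff huv, mem_iSupSet_iff huv, collapseLE]
  split_ifs <;> simp only [Set.mem_Icc] at * <;> grind

theorem iLeQ_mk_iff (huv : u ≤ v) :
    iLeQ u v (Quotient.mk _ x) (Quotient.mk _ y) ↔ collapseLE u v x y := by
  refine ⟨fun ⟨x', y', hx, hy, h⟩ => ?_, fun h => ⟨x, y, rfl, rfl, (ile_iff_collapseLE huv).2 h⟩⟩
  exact (collapseLE_congr (Quotient.exact hx.symm) (Quotient.exact hy.symm)).1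
    ((ile_iff_collapseLE huv).1 h)

variable (u v) in
theorem iLeQ_refl (a : Quotient (irelSetoid u v)) : iLeQ u v a a :=
  Quotient.inductionOn a fun x => ⟨x, x, rfl, rfl, Or.inl (by
    unfold ilow ihigh
    split_ifs with hx
    exacts [hx.1.trans hx.2, le_rfl])⟩

theorem iLeQ_trans (huv : u ≤ v) {a b c : Quotient (irelSetoid u v)} :
    iLeQ u v a b → iLeQ u v b c → iLeQ u v a c :=
  Quotient.inductionOn₃ a b c fun _ _ _ => by
    simpa only [iLeQ_mk_iff huv] using collapseLE_trans

theorem iLeQ_antisymm (huv : u ≤ v) (a b : Quotient (irelSetoid u v)) :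
    iLeQ u v a b → iLeQ u v b a → a = b :=
  Quotient.inductionOn₂ a b fun _ _ hxy hyx => Quotient.sound
    (irel_of_collapseLE_of_collapseLE ((iLeQ_mk_iff huv).1 hxy) ((iLeQ_mk_iff huv).1 hyx))

theorem iLeQ_exists_lub (huv : u ≤ v) (hp : ¬ iNested u v) (a b : Quotient (irelSetoid u v)) :
    ∃ c, ∀ d, iLeQ u v c d ↔ iLeQ u v a d ∧ iLeQ u v b d := by
  refine Quotient.inductionOn₂ a b fun x y => ?_
  obtain ⟨z, hz⟩ :=
    exists_collapseLE_lub (fun x y => le_sup_or_le_sup_of_not_iNested huv hp) x y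
  exact ⟨Quotient.mk _ z, fun d => Quotient.inductionOn d fun d => by
    simpa only [iLeQ_mk_iff huv] using hz d⟩

theorem iLeQ_exists_glb (huv : u ≤ v) (hp : ¬ iNested u v) (a b : Quotient (irelSetoid u v)) :
    ∃ c, ∀ d, iLeQ u v d c ↔ iLeQ u v d a ∧ iLeQ u v d b := by
  refine Quotient.inductionOn₂ a b fun x y => ?_
  obtain ⟨z, hz⟩ := exists_collapseLE_glb huv hp x y
  exact ⟨Quotient.mk _ z, fun d => Quotient.inductionOn d fun d => by
    simpa only [iLeQ_mk_iff huv] using hz d⟩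

end Interval

theorem no_crown_implies_latticeGenerating_general {L : Type*} [Lattice L]
    (hnc : ¬ ∃ x y : Fin 3 → L,
        (∀ i j, x i ≤ y j ↔ (j = i ∨ j = i + 1)) ∧
        (∀ i j, i ≠ j → ¬ x i ≤ x j) ∧
        (∀ i j, i ≠ j → ¬ y i ≤ y j) ∧
        (∀ i j, ¬ y i ≤ x j)) :
    ∀ u v : L, u ≤ v →
      (¬ iNested u v) ∧
      (Reflexive (iLeQ u v) ∧ Transitive (iLeQ u v) ∧
        (∀ a b : Quotient (irelSetoid u v), iLeQ u v a b → iLeQ u v b a → a = b) ∧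
        (∀ a b : Quotient (irelSetoid u v), ∃ c, iLeQ u v a c ∧ iLeQ u v b c ∧
          ∀ d, iLeQ u v a d → iLeQ u v b d → iLeQ u v c d) ∧
        (∀ a b : Quotient (irelSetoid u v), ∃ c, iLeQ u v c a ∧ iLeQ u v c b ∧
          ∀ d, iLeQ u v d a → iLeQ u v d b → iLeQ u v d c)) := by
  intro u v huv
  have hp : ¬ iNested u v := fun h =>
    let ⟨x, y, hxy⟩ := h.exists_crown huv
    hnc ⟨x, y, hxy, crown_incomparable_of_le_iff hxy⟩
  refine ⟨hp, iLeQ_refl u v, fun _ _ _ => iLeQ_trans huv, iLeQ_antisymm huv,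
    fun a b => ?_, fun a b => ?_⟩
  · obtain ⟨c, hc⟩ := iLeQ_exists_lub huv hp a b
    obtain ⟨hac, hbc⟩ := (hc c).1 (iLeQ_refl u v c)
    exact ⟨c, hac, hbc, fun d had hbd => (hc d).2 ⟨had, hbd⟩⟩
  · obtain ⟨c, hc⟩ := iLeQ_exists_glb huv hp a b
    obtain ⟨hca, hcb⟩ := (hc c).1 (iLeQ_refl u v c)
    exact ⟨c, hca, hcb, fun d hda hdb => (hc d).2 ⟨hda, hdb⟩⟩

/-- If a finite lattice contains no crown of order 3 as a suborder, then every
interval is pure and every 1-generated interval relation is lattice-generating. -/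
theorem no_crown_implies_latticeGenerating {L : Type*} [Lattice L] [Finite L]
    (hnc : ¬ ∃ x y : Fin 3 → L,
        (∀ i j, x i ≤ y j ↔ (j = i ∨ j = i + 1)) ∧
        (∀ i j, i ≠ j → ¬ x i ≤ x j) ∧
        (∀ i j, i ≠ j → ¬ y i ≤ y j) ∧
        (∀ i j, ¬ y i ≤ x j)) :
    ∀ u v : L, u ≤ v →
      (¬ iNested u v) ∧
      (Reflexive (iLeQ u v) ∧ Transitive (iLeQ u v) ∧
        (∀ a b : Quotient (irelSetoid u v), iLeQ u v a b → iLeQ u v b a → a = b) ∧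
        (∀ a b : Quotient (irelSetoid u v), ∃ c, iLeQ u v a c ∧ iLeQ u v b c ∧
          ∀ d, iLeQ u v a d → iLeQ u v b d → iLeQ u v c d) ∧
        (∀ a b : Quotient (irelSetoid u v), ∃ c, iLeQ u v c a ∧ iLeQ u v c b ∧
          ∀ d, iLeQ u v d a → iLeQ u v d b → iLeQ u v d c)) :=
  no_crown_implies_latticeGenerating_general hnc
end

section
/- Let L be a finite lattice, S a pure interval of L, θ = θ_S, and u,v,w,x,y,z ∈ L with u ∧ v = w and x ∨ y = z. Then: (i) if u ∈ S ∪ S↑, v,w ∈ S↓ and v ≠ w, then [u]θ ∧ [v]θ ≠ [w]θ in L/θ; (ii) if x ∈ S ∪ S↓, y,z ∈ S↑ and y ≠ z, then [x]θ ∨ [y]θ ≠ [z]θ in L/θ. -/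
open Classical

variable {L : Type*}

/-- Classes of elements outside `S` are singletons. -/
lemma imk_eq [Preorder L] {u v a b : L} (ha : a ∉ Set.Icc u v)
    (h : Quotient.mk (irelSetoid u v) a = Quotient.mk (irelSetoid u v) b) : a = b := by
  rcases Quotient.exact h with rfl | ⟨h1, _⟩
  · rfl
  · exact absurd h1 ha

/-- `S↓` and `S↑` are disjoint. -/
lemma idown_up_disj [Preorder L] {u v a : L} (hd : a ∈ iSdown u v) (hu : a ∈ iSupSet u v) :
    False := by
  obtain ⟨hna, s, hs, hls⟩ := hd
  obtain ⟨_, t, ht, hlt⟩ := hu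
  exact hna ⟨ht.1.trans hlt.le, hls.le.trans hs.2⟩

/-- Non-preservation of meets and joins under the interval factorization. -/
theorem factor_meet_join_not_preserved {L : Type*} [Lattice L] [Finite L]
    (uS vS : L) (hS : uS ≤ vS) (hpure : ¬ iNested uS vS)
    (u v w x y z : L) (hm : u ⊓ v = w) (hj : x ⊔ y = z) :
    ((u ∈ Set.Icc uS vS ∪ iSupSet uS vS → v ∈ iSdown uS vS → w ∈ iSdown uS vS → v ≠ w →
      ¬ (iLeQ uS vS (Quotient.mk (irelSetoid uS vS) w) (Quotient.mk (irelSetoid uS vS) u) ∧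
         iLeQ uS vS (Quotient.mk (irelSetoid uS vS) w) (Quotient.mk (irelSetoid uS vS) v) ∧
         ∀ d, iLeQ uS vS d (Quotient.mk (irelSetoid uS vS) u) →
              iLeQ uS vS d (Quotient.mk (irelSetoid uS vS) v) →
              iLeQ uS vS d (Quotient.mk (irelSetoid uS vS) w)))) ∧
    ((x ∈ Set.Icc uS vS ∪ iSdown uS vS → y ∈ iSupSet uS vS → z ∈ iSupSet uS vS → y ≠ z →
      ¬ (iLeQ uS vS (Quotient.mk (irelSetoid uS vS) x) (Quotient.mk (irelSetoid uS vS) z) ∧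
         iLeQ uS vS (Quotient.mk (irelSetoid uS vS) y) (Quotient.mk (irelSetoid uS vS) z) ∧
         ∀ d, iLeQ uS vS (Quotient.mk (irelSetoid uS vS) x) d →
              iLeQ uS vS (Quotient.mk (irelSetoid uS vS) y) d →
              iLeQ uS vS (Quotient.mk (irelSetoid uS vS) z) d))) := by
  constructor
  · intro hu hv hw hne ⟨_, _, hmin⟩
    have hvS : v ∉ Set.Icc uS vS := hv.1
    have hwS : w ∉ Set.Icc uS vS := hw.1
    -- d = [v] satisfies d ≤ [u] and d ≤ [v]
    have hdu : iLeQ uS vS (Quotient.mk (irelSetoid uS vS) v)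
        (Quotient.mk (irelSetoid uS vS) u) := by
      refine ⟨v, u, rfl, rfl, ?_⟩
      rcases hu with hu | hu
      · left
        rw [ilow, if_neg hvS, ihigh, if_pos hu]
        obtain ⟨_, s, hs, hls⟩ := hv
        exact hls.le.trans hs.2
      · exact Or.inr ⟨hv, hu⟩
    have hdv : iLeQ uS vS (Quotient.mk (irelSetoid uS vS) v)
        (Quotient.mk (irelSetoid uS vS) v) := by
      refine ⟨v, v, rfl, rfl, Or.inl ?_⟩
      rw [ilow, if_neg hvS, ihigh, if_neg hvS]
    obtain ⟨a, b, hav, hbw, hab⟩ := hmin _ hdu hdv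
    obtain rfl := imk_eq hvS hav
    obtain rfl := imk_eq hwS hbw
    rcases hab with hab | ⟨_, hup⟩
    · rw [ilow, if_neg hvS, ihigh, if_neg hwS] at hab
      exact hne (le_antisymm hab (hm ▸ inf_le_right))
    · exact idown_up_disj hw hup
  · intro hx hy hz hne ⟨_, _, hmax⟩
    have hyS : y ∉ Set.Icc uS vS := hy.1
    have hzS : z ∉ Set.Icc uS vS := hz.1
    have hdx : iLeQ uS vS (Quotient.mk (irelSetoid uS vS) x)
        (Quotient.mk (irelSetoid uS vS) y) := by
      refine ⟨x, y, rfl, rfl, ?_⟩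
      rcases hx with hx | hx
      · left
        rw [ilow, if_pos hx, ihigh, if_neg hyS]
        obtain ⟨_, s, hs, hls⟩ := hy
        exact hs.1.trans hls.le
      · exact Or.inr ⟨hx, hy⟩
    have hdy : iLeQ uS vS (Quotient.mk (irelSetoid uS vS) y)
        (Quotient.mk (irelSetoid uS vS) y) := by
      refine ⟨y, y, rfl, rfl, Or.inl ?_⟩
      rw [ilow, if_neg hyS, ihigh, if_neg hyS]
    obtain ⟨a, b, haz, hby, hab⟩ := hmax _ hdx hdy
    obtain rfl := imk_eq hzS haz
    obtain rfl := imk_eq hyS hby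
    rcases hab with hab | ⟨hdn, _⟩
    · rw [ilow, if_neg hzS, ihigh, if_neg hyS] at hab
      exact hne (le_antisymm (hj ▸ le_sup_right) hab)
    · exact idown_up_disj hdn hz
end

section
/- Let L be a finite lattice, S a pure interval of L, θ = θ_S, and u,v,w ∈ L with u ∧ v = w. If [u]θ ∧ [v]θ ≠ [w]θ in L/θ, then (up to swapping u and v) u ∈ S ∪ S↑, v ∈ S↓ ∪ S∥, and v ≠ w. Dually, if x ∨ y = z in L and [x]θ ∨ [y]θ ≠ [z]θ, then x ∈ S ∪ S↓, y ∈ S↑ ∪ S∥, and y ≠ z. -/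
open Classical

variable {L : Type*}

section Aux

variable [Lattice L] {uS vS : L}

lemma ile_of_le (hS : uS ≤ vS) {x y : L} (h : x ≤ y) : ile uS vS x y := by
  left
  unfold ilow ihigh
  by_cases h1 : x ∈ Set.Icc uS vS <;> by_cases h2 : y ∈ Set.Icc uS vS <;>
    simp only [h1, h2, if_pos, if_neg, if_true, if_false]
  · exact hS
  · exact h1.1.trans h
  · exact h.trans h2.2
  · exact h

lemma mem_up_iff (hS : uS ≤ vS) {a : L} :
    a ∈ Set.Icc uS vS ∪ iSupSet uS vS ↔ uS ≤ a := by
  constructor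
  · rintro (h | ⟨_, s, hs, hlt⟩)
    · exact h.1
    · exact hs.1.trans hlt.le
  · intro h
    by_cases hA : a ∈ Set.Icc uS vS
    · exact Or.inl hA
    · refine Or.inr ⟨hA, uS, ⟨le_rfl, hS⟩, lt_of_le_of_ne h ?_⟩
      rintro rfl; exact hA ⟨le_rfl, hS⟩

lemma mem_downpar_iff (hS : uS ≤ vS) {a : L} :
    a ∈ iSdown uS vS ∪ iSpar uS vS ↔ ¬ uS ≤ a := by
  constructor
  · rintro (⟨haS, s, hs, hlt⟩ | ⟨haS, hpar⟩) h
    · exact haS ⟨h, hlt.le.trans hs.2⟩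
    · exact (hpar uS ⟨le_rfl, hS⟩).1
        (lt_of_le_of_ne h (by rintro rfl; exact haS ⟨le_rfl, hS⟩))
  · intro h
    have haS : a ∉ Set.Icc uS vS := fun hh => h hh.1
    by_cases hd : ∃ s ∈ Set.Icc uS vS, a < s
    · obtain ⟨s, hs, hlt⟩ := hd
      exact Or.inl ⟨haS, s, hs, hlt⟩
    · refine Or.inr ⟨haS, fun s hs => ⟨fun hlt => h (hs.1.trans hlt.le), fun hlt => hd ⟨s, hs, hlt⟩⟩⟩

lemma mem_down_iff (hS : uS ≤ vS) {a : L} :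
    a ∈ Set.Icc uS vS ∪ iSdown uS vS ↔ a ≤ vS := by
  constructor
  · rintro (h | ⟨_, s, hs, hlt⟩)
    · exact h.2
    · exact hlt.le.trans hs.2
  · intro h
    by_cases hA : a ∈ Set.Icc uS vS
    · exact Or.inl hA
    · refine Or.inr ⟨hA, vS, ⟨hS, le_rfl⟩, lt_of_le_of_ne h ?_⟩
      rintro rfl; exact hA ⟨hS, le_rfl⟩

lemma mem_uppar_iff (hS : uS ≤ vS) {a : L} :
    a ∈ iSupSet uS vS ∪ iSpar uS vS ↔ ¬ a ≤ vS := by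
  constructor
  · rintro (⟨haS, s, hs, hlt⟩ | ⟨haS, hpar⟩) h
    · exact haS ⟨hs.1.trans hlt.le, h⟩
    · exact (hpar vS ⟨hS, le_rfl⟩).2
        (lt_of_le_of_ne h (by rintro rfl; exact haS ⟨hS, le_rfl⟩))
  · intro h
    have haS : a ∉ Set.Icc uS vS := fun hh => h hh.2
    by_cases hd : ∃ s ∈ Set.Icc uS vS, s < a
    · obtain ⟨s, hs, hlt⟩ := hd
      exact Or.inl ⟨haS, s, hs, hlt⟩
    · refine Or.inr ⟨haS, fun s hs => ⟨fun hlt => hd ⟨s, hs, hlt⟩, fun hlt => h (hlt.le.trans hs.2)⟩⟩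

lemma ile_of_down (hS : uS ≤ vS) {x w : L} (hx : x ∈ iSdown uS vS) (hw : uS ≤ w) :
    ile uS vS x w := by
  obtain ⟨hxS, s, hsS, hlt⟩ := hx
  by_cases hwS : w ∈ Set.Icc uS vS
  · left
    unfold ilow ihigh
    rw [if_neg hxS, if_pos hwS]
    exact (hlt.trans_le hsS.2).le
  · refine Or.inr ⟨⟨hxS, s, hsS, hlt⟩, hwS, uS, ⟨le_rfl, hS⟩, lt_of_le_of_ne hw ?_⟩
    rintro rfl; exact hwS ⟨le_rfl, hS⟩

lemma ile_of_up (hS : uS ≤ vS) {z d : L} (hd : d ∈ iSupSet uS vS) (hz : z ≤ vS) :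
    ile uS vS z d := by
  obtain ⟨hdS, s, hsS, hlt⟩ := hd
  by_cases hzS : z ∈ Set.Icc uS vS
  · left
    unfold ilow ihigh
    rw [if_pos hzS, if_neg hdS]
    exact (hsS.1.trans_lt hlt).le
  · refine Or.inr ⟨⟨hzS, vS, ⟨hS, le_rfl⟩, lt_of_le_of_ne hz ?_⟩, hdS, s, hsS, hlt⟩
    rintro rfl; exact hzS ⟨hS, le_rfl⟩

lemma ihigh_inf {u v : L} (hu : uS ≤ u) (hv : uS ≤ v) :
    ihigh uS vS u ⊓ ihigh uS vS v ≤ ihigh uS vS (u ⊓ v) := by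
  unfold ihigh
  by_cases hw : u ⊓ v ∈ Set.Icc uS vS
  · rw [if_pos hw]
    by_cases h1 : u ∈ Set.Icc uS vS
    · rw [if_pos h1]; exact inf_le_left
    · rw [if_neg h1]
      by_cases h2 : v ∈ Set.Icc uS vS
      · rw [if_pos h2]; exact inf_le_right
      · rw [if_neg h2]; exact hw.2
  · have h1 : u ∉ Set.Icc uS vS := fun h => hw ⟨le_inf hu hv, inf_le_left.trans h.2⟩
    have h2 : v ∉ Set.Icc uS vS := fun h => hw ⟨le_inf hu hv, inf_le_right.trans h.2⟩
    rw [if_neg hw, if_neg h1, if_neg h2]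

lemma ilow_sup {x y : L} (hx : x ≤ vS) (hy : y ≤ vS) :
    ilow uS vS (x ⊔ y) ≤ ilow uS vS x ⊔ ilow uS vS y := by
  unfold ilow
  by_cases hz : x ⊔ y ∈ Set.Icc uS vS
  · rw [if_pos hz]
    by_cases h1 : x ∈ Set.Icc uS vS
    · rw [if_pos h1]; exact le_sup_left
    · rw [if_neg h1]
      by_cases h2 : y ∈ Set.Icc uS vS
      · rw [if_pos h2]; exact le_sup_right
      · rw [if_neg h2]; exact hz.1
  · have h1 : x ∉ Set.Icc uS vS := fun h => hz ⟨h.1.trans le_sup_left, sup_le hx hy⟩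
    have h2 : y ∉ Set.Icc uS vS := fun h => hz ⟨h.1.trans le_sup_right, sup_le hx hy⟩
    rw [if_neg hz, if_neg h1, if_neg h2]

lemma meet_upper (hS : uS ≤ vS) {u v : L} (hu : uS ≤ u) (hv : uS ≤ v) :
    ile uS vS (u ⊓ v) u ∧ ile uS vS (u ⊓ v) v ∧
      ∀ x, ile uS vS x u → ile uS vS x v → ile uS vS x (u ⊓ v) := by
  refine ⟨ile_of_le hS inf_le_left, ile_of_le hS inf_le_right, ?_⟩
  intro x hxu hxv
  rcases hxu with h1 | ⟨hxd, _⟩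
  · rcases hxv with h2 | ⟨hxd, _⟩
    · exact Or.inl ((le_inf h1 h2).trans (ihigh_inf hu hv))
    · exact ile_of_down hS hxd (le_inf hu hv)
  · exact ile_of_down hS hxd (le_inf hu hv)

lemma meet_lower (hS : uS ≤ vS) {u v : L} (hu : ¬ uS ≤ u) (hv : ¬ uS ≤ v) :
    ile uS vS (u ⊓ v) u ∧ ile uS vS (u ⊓ v) v ∧
      ∀ x, ile uS vS x u → ile uS vS x v → ile uS vS x (u ⊓ v) := by
  have huS : u ∉ Set.Icc uS vS := fun h => hu h.1
  have hvS : v ∉ Set.Icc uS vS := fun h => hv h.1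
  have hwS : u ⊓ v ∉ Set.Icc uS vS := fun h => hu (h.1.trans inf_le_left)
  have huU : u ∉ iSupSet uS vS := by
    rintro ⟨_, s, hs, hlt⟩; exact hu (hs.1.trans hlt.le)
  have hvU : v ∉ iSupSet uS vS := by
    rintro ⟨_, s, hs, hlt⟩; exact hv (hs.1.trans hlt.le)
  refine ⟨ile_of_le hS inf_le_left, ile_of_le hS inf_le_right, ?_⟩
  intro x hxu hxv
  rcases hxu with h1 | ⟨_, h1'⟩
  · rcases hxv with h2 | ⟨_, h2'⟩
    · left
      unfold ihigh at h1 h2 ⊢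
      rw [if_neg huS] at h1
      rw [if_neg hvS] at h2
      rw [if_neg hwS]
      exact le_inf h1 h2
    · exact absurd h2' hvU
  · exact absurd h1' huU

lemma join_lower (hS : uS ≤ vS) {x y : L} (hx : x ≤ vS) (hy : y ≤ vS) :
    ile uS vS x (x ⊔ y) ∧ ile uS vS y (x ⊔ y) ∧
      ∀ d, ile uS vS x d → ile uS vS y d → ile uS vS (x ⊔ y) d := by
  refine ⟨ile_of_le hS le_sup_left, ile_of_le hS le_sup_right, ?_⟩
  intro d hxd hyd
  rcases hxd with h1 | ⟨_, hdu⟩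
  · rcases hyd with h2 | ⟨_, hdu⟩
    · exact Or.inl ((ilow_sup hx hy).trans (sup_le h1 h2))
    · exact ile_of_up hS hdu (sup_le hx hy)
  · exact ile_of_up hS hdu (sup_le hx hy)

lemma join_upper (hS : uS ≤ vS) {x y : L} (hx : ¬ x ≤ vS) (hy : ¬ y ≤ vS) :
    ile uS vS x (x ⊔ y) ∧ ile uS vS y (x ⊔ y) ∧
      ∀ d, ile uS vS x d → ile uS vS y d → ile uS vS (x ⊔ y) d := by
  have hxS : x ∉ Set.Icc uS vS := fun h => hx h.2
  have hyS : y ∉ Set.Icc uS vS := fun h => hy h.2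
  have hzS : x ⊔ y ∉ Set.Icc uS vS := fun h => hx (le_sup_left.trans h.2)
  have hxD : x ∉ iSdown uS vS := by
    rintro ⟨_, s, hs, hlt⟩; exact hx (hlt.le.trans hs.2)
  have hyD : y ∉ iSdown uS vS := by
    rintro ⟨_, s, hs, hlt⟩; exact hy (hlt.le.trans hs.2)
  refine ⟨ile_of_le hS le_sup_left, ile_of_le hS le_sup_right, ?_⟩
  intro d hxd hyd
  rcases hxd with h1 | ⟨h1', _⟩
  · rcases hyd with h2 | ⟨h2', _⟩
    · left
      unfold ilow at h1 h2 ⊢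
      rw [if_neg hxS] at h1
      rw [if_neg hyS] at h2
      rw [if_neg hzS]
      exact sup_le h1 h2
    · exact absurd h2' hyD
  · exact absurd h1' hxD

lemma ile_of_rel {x x' y y' : L} (hx : irel uS vS x x') (hy : irel uS vS y y')
    (h : ile uS vS x' y') : ile uS vS x y := by
  have e1 : ilow uS vS x = ilow uS vS x' := by
    rcases hx with rfl | ⟨h1, h2⟩
    · rfl
    · unfold ilow; rw [if_pos h1, if_pos h2]
  have e2 : ihigh uS vS y = ihigh uS vS y' := by
    rcases hy with rfl | ⟨h1, h2⟩
    · rfl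
    · unfold ihigh; rw [if_pos h1, if_pos h2]
  rcases h with h | ⟨hd, hu⟩
  · left; rw [e1, e2]; exact h
  · rcases hx with rfl | ⟨h1, h2⟩
    · rcases hy with rfl | ⟨h3, h4⟩
      · exact Or.inr ⟨hd, hu⟩
      · exact absurd h4 hu.1
    · exact absurd h2 hd.1

lemma iLeQ_iff {x y : L} :
    iLeQ uS vS (Quotient.mk (irelSetoid uS vS) x) (Quotient.mk (irelSetoid uS vS) y) ↔
      ile uS vS x y := by
  constructor
  · rintro ⟨x', y', hx, hy, h⟩
    exact ile_of_rel (Quotient.exact hx) (Quotient.exact hy) h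
  · intro h
    exact ⟨x, y, rfl, rfl, h⟩

end Aux

/-- If a meet (resp. join) is not preserved by the interval factorization,
the elements involved must lie in the indicated regions. -/
theorem factor_meet_join_failure_location {L : Type*} [Lattice L] [Finite L]
    (uS vS : L) (hS : uS ≤ vS) (hpure : ¬ iNested uS vS) :
    (∀ u v w : L, u ⊓ v = w →
      ¬ (iLeQ uS vS (Quotient.mk (irelSetoid uS vS) w) (Quotient.mk (irelSetoid uS vS) u) ∧
         iLeQ uS vS (Quotient.mk (irelSetoid uS vS) w) (Quotient.mk (irelSetoid uS vS) v) ∧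
         ∀ d, iLeQ uS vS d (Quotient.mk (irelSetoid uS vS) u) →
              iLeQ uS vS d (Quotient.mk (irelSetoid uS vS) v) →
              iLeQ uS vS d (Quotient.mk (irelSetoid uS vS) w)) →
      ((u ∈ Set.Icc uS vS ∪ iSupSet uS vS ∧ v ∈ iSdown uS vS ∪ iSpar uS vS ∧ v ≠ w) ∨
       (v ∈ Set.Icc uS vS ∪ iSupSet uS vS ∧ u ∈ iSdown uS vS ∪ iSpar uS vS ∧ u ≠ w))) ∧
    (∀ x y z : L, x ⊔ y = z →
      ¬ (iLeQ uS vS (Quotient.mk (irelSetoid uS vS) x) (Quotient.mk (irelSetoid uS vS) z) ∧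
         iLeQ uS vS (Quotient.mk (irelSetoid uS vS) y) (Quotient.mk (irelSetoid uS vS) z) ∧
         ∀ d, iLeQ uS vS (Quotient.mk (irelSetoid uS vS) x) d →
              iLeQ uS vS (Quotient.mk (irelSetoid uS vS) y) d →
              iLeQ uS vS (Quotient.mk (irelSetoid uS vS) z) d) →
      ((x ∈ Set.Icc uS vS ∪ iSdown uS vS ∧ y ∈ iSupSet uS vS ∪ iSpar uS vS ∧ y ≠ z) ∨
       (y ∈ Set.Icc uS vS ∪ iSdown uS vS ∧ x ∈ iSupSet uS vS ∪ iSpar uS vS ∧ x ≠ z))) := by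
  constructor
  · intro u v w huvw hne
    subst huvw
    by_cases h1 : uS ≤ u <;> by_cases h2 : uS ≤ v
    · exfalso
      apply hne
      obtain ⟨a, b, c⟩ := meet_upper hS h1 h2
      refine ⟨iLeQ_iff.mpr a, iLeQ_iff.mpr b, ?_⟩
      intro d hd1 hd2
      obtain ⟨x, rfl⟩ := Quotient.exists_rep d
      exact iLeQ_iff.mpr (c x (iLeQ_iff.mp hd1) (iLeQ_iff.mp hd2))
    · by_cases hvw : v = u ⊓ v
      · exfalso
        apply hne
        have hvu : v ≤ u := inf_eq_right.mp hvw.symm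
        rw [← hvw]
        exact ⟨iLeQ_iff.mpr (ile_of_le hS hvu), iLeQ_iff.mpr (ile_of_le hS le_rfl),
          fun d _ hd2 => hd2⟩
      · exact Or.inl ⟨(mem_up_iff hS).mpr h1, (mem_downpar_iff hS).mpr h2, hvw⟩
    · by_cases huw : u = u ⊓ v
      · exfalso
        apply hne
        have huv : u ≤ v := inf_eq_left.mp huw.symm
        rw [← huw]
        exact ⟨iLeQ_iff.mpr (ile_of_le hS le_rfl), iLeQ_iff.mpr (ile_of_le hS huv),
          fun d hd1 _ => hd1⟩
      · exact Or.inr ⟨(mem_up_iff hS).mpr h2, (mem_downpar_iff hS).mpr h1, huw⟩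
    · exfalso
      apply hne
      obtain ⟨a, b, c⟩ := meet_lower hS h1 h2
      refine ⟨iLeQ_iff.mpr a, iLeQ_iff.mpr b, ?_⟩
      intro d hd1 hd2
      obtain ⟨x, rfl⟩ := Quotient.exists_rep d
      exact iLeQ_iff.mpr (c x (iLeQ_iff.mp hd1) (iLeQ_iff.mp hd2))
  · intro x y z hxyz hne
    subst hxyz
    by_cases h1 : x ≤ vS <;> by_cases h2 : y ≤ vS
    · exfalso
      apply hne
      obtain ⟨a, b, c⟩ := join_lower hS h1 h2
      refine ⟨iLeQ_iff.mpr a, iLeQ_iff.mpr b, ?_⟩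
      intro d hd1 hd2
      obtain ⟨e, rfl⟩ := Quotient.exists_rep d
      exact iLeQ_iff.mpr (c e (iLeQ_iff.mp hd1) (iLeQ_iff.mp hd2))
    · by_cases hyz : y = x ⊔ y
      · exfalso
        apply hne
        have hxy : x ≤ y := sup_eq_right.mp hyz.symm
        rw [← hyz]
        exact ⟨iLeQ_iff.mpr (ile_of_le hS hxy), iLeQ_iff.mpr (ile_of_le hS le_rfl),
          fun d _ hd2 => hd2⟩
      · exact Or.inl ⟨(mem_down_iff hS).mpr h1, (mem_uppar_iff hS).mpr h2, hyz⟩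
    · by_cases hxz : x = x ⊔ y
      · exfalso
        apply hne
        have hyx : y ≤ x := sup_eq_left.mp hxz.symm
        rw [← hxz]
        exact ⟨iLeQ_iff.mpr (ile_of_le hS le_rfl), iLeQ_iff.mpr (ile_of_le hS hyx),
          fun d hd1 _ => hd1⟩
      · exact Or.inr ⟨(mem_down_iff hS).mpr h2, (mem_uppar_iff hS).mpr h1, hxz⟩
    · exfalso
      apply hne
      obtain ⟨a, b, c⟩ := join_upper hS h1 h2
      refine ⟨iLeQ_iff.mpr a, iLeQ_iff.mpr b, ?_⟩
      intro d hd1 hd2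
      obtain ⟨e, rfl⟩ := Quotient.exists_rep d
      exact iLeQ_iff.mpr (c e (iLeQ_iff.mp hd1) (iLeQ_iff.mp hd2))
end

section
/- Let K = (G,M,I) be a finite formal context and S = [(A,B),(C,D)] an interval of the concept lattice B(K). Let J̃ = I ∪ (C × B). Then the block relations J of K with J ⊇ J̃ are exactly the block relations whose corresponding complete tolerance relation θ on B(K) has a θ-block containing S, and the smallest block relation containing J̃ (which exists since block relations form a closure system) corresponds to the finest such tolerance relation. -/
variable {G M : Type*}

/-- `J` is a block relation of the context `(G, M, I)`: it contains `I`, each row of `J` is an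
intent of the context, and each column of `J` is an extent of the context. -/
def IsBlockRel (I J : G → M → Prop) : Prop :=
  (∀ g m, I g m → J g m) ∧
  (∀ g : G, ∃ c : Concept G M I, {m | J g m} = c.intent) ∧
  (∀ m : M, ∃ c : Concept G M I, {g | J g m} = c.extent)

/-- The complete tolerance relation on the concept lattice corresponding to a block
relation `J`. -/
def tolOf (I J : G → M → Prop) (c d : Concept G M I) : Prop :=
  (∀ g ∈ c.extent, ∀ m ∈ d.intent, J g m) ∧ (∀ g ∈ d.extent, ∀ m ∈ c.intent, J g m)

/-
Each of the three conditions defining a block relation is preserved by intersections, because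
intents and extents are closed under intersections; so the block relations above a given relation
have a least element, their intersection. For concepts `c, d` of the interval `[c₁, c₂]` the
rectangle `c.extent × d.intent` lies inside `c₂.extent × c₁.intent`, and that rectangle is itself
one of them (take `c = c₂`, `d = c₁`), so `tolOf I J` relates all pairs of the interval exactly
when `J` contains `c₂.extent × c₁.intent`.
-/

section BlockRelations

open Order

variable {I : G → M → Prop}

theorem isBlockRel_iff {J : G → M → Prop} :
    IsBlockRel I J ↔ (∀ g m, I g m → J g m) ∧ (∀ g, IsIntent I {m | J g m}) ∧
      ∀ m, IsExtent I {g | J g m} := by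
  simp only [IsBlockRel, Concept.isIntent_iff_exists_concept, Concept.isExtent_iff_exists_concept,
    eq_comm]

theorem IsBlockRel.iInf {ι : Sort*} {J : ι → G → M → Prop} (hJ : ∀ i, IsBlockRel I (J i)) :
    IsBlockRel I fun g m => ∀ i, J i g m := by
  simp only [isBlockRel_iff] at hJ ⊢
  refine ⟨fun g m hgm i => (hJ i).1 g m hgm, fun g => ?_, fun m => ?_⟩
  · simpa only [Set.ofPred_forall] using IsIntent.iInter _ fun i => (hJ i).2.1 g
  · simpa only [Set.ofPred_forall] using IsExtent.iInter _ fun i => (hJ i).2.2 m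

variable (I) in
def blockClosure (K : G → M → Prop) : G → M → Prop :=
  fun g m => ∀ J : {J // IsBlockRel I J ∧ K ≤ J}, J.1 g m

theorem isBlockRel_blockClosure (K : G → M → Prop) : IsBlockRel I (blockClosure I K) :=
  IsBlockRel.iInf fun J => J.2.1

theorem le_blockClosure (K : G → M → Prop) : K ≤ blockClosure I K :=
  fun g m hgm J => J.2.2 g m hgm

theorem blockClosure_le {K J : G → M → Prop} (hJ : IsBlockRel I J) (hKJ : K ≤ J) :
    blockClosure I K ≤ J :=
  fun _ _ hgm => hgm ⟨J, hJ, hKJ⟩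

theorem tolOf_mono {J J' : G → M → Prop} (h : J ≤ J') {c d : Concept G M I} :
    tolOf I J c d → tolOf I J' c d
  | ⟨hcd, hdc⟩ => ⟨fun g hg m hm => h g m (hcd g hg m hm), fun g hg m hm => h g m (hdc g hg m hm)⟩

theorem forall_tolOf_Icc_iff {J : G → M → Prop} {c₁ c₂ : Concept G M I} (hc : c₁ ≤ c₂) :
    (∀ c ∈ Set.Icc c₁ c₂, ∀ d ∈ Set.Icc c₁ c₂, tolOf I J c d) ↔
      ∀ g m, g ∈ c₂.extent → m ∈ c₁.intent → J g m := by
  constructor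
  · intro h g m hg hm
    exact (h c₂ ⟨hc, le_rfl⟩ c₁ ⟨le_rfl, hc⟩).1 g hg m hm
  · intro h c ⟨hc₁, hc₂⟩ d ⟨hd₁, hd₂⟩
    have rect {c d : Concept G M I} (hc : c ≤ c₂) (hd : c₁ ≤ d) :
        ∀ g ∈ c.extent, ∀ m ∈ d.intent, J g m := fun g hg m hm =>
      h g m (Concept.extent_subset_extent_iff.2 hc hg) (Concept.intent_subset_intent_iff.2 hd hm)
    exact ⟨rect hc₂ hd₁, rect hd₂ hc₁⟩

end BlockRelations

theorem block_relations_imploding_interval_general (I : G → M → Prop)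
    (c₁ c₂ : Concept G M I) (hc : c₁ ≤ c₂)
    (Jt : G → M → Prop) (hJt : ∀ g m, Jt g m ↔ (I g m ∨ (g ∈ c₂.extent ∧ m ∈ c₁.intent))) :
    (∀ J : G → M → Prop, IsBlockRel I J →
      ((∀ g m, Jt g m → J g m) ↔
        ∀ c ∈ Set.Icc c₁ c₂, ∀ d ∈ Set.Icc c₁ c₂, tolOf I J c d)) ∧
    (∃ J₀ : G → M → Prop, IsBlockRel I J₀ ∧ (∀ g m, Jt g m → J₀ g m) ∧
      ∀ J : G → M → Prop, IsBlockRel I J → (∀ g m, Jt g m → J g m) →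
        (∀ g m, J₀ g m → J g m) ∧ (∀ c d, tolOf I J₀ c d → tolOf I J c d)) := by
  have Jt_le_iff {J : G → M → Prop} (hJ : IsBlockRel I J) :
      (∀ g m, Jt g m → J g m) ↔ ∀ g m, g ∈ c₂.extent → m ∈ c₁.intent → J g m := by
    simp only [hJt, or_imp, forall_and, and_imp]
    exact and_iff_right hJ.1
  refine ⟨fun J hJ => (Jt_le_iff hJ).trans (forall_tolOf_Icc_iff hc).symm,
    blockClosure I Jt, isBlockRel_blockClosure Jt, le_blockClosure Jt, fun J hJ hJtJ => ?_⟩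
  exact ⟨blockClosure_le hJ hJtJ, fun c d => tolOf_mono (blockClosure_le hJ hJtJ)⟩

/-- Let `S = [(A,B),(C,D)]` be an interval of the concept lattice of a finite
context `(G,M,I)` and `J̃ = I ∪ (C × B)`. The block relations containing `J̃` are exactly the
block relations whose corresponding complete tolerance relation has a block containing `S`;
moreover the smallest block relation containing `J̃` exists and corresponds to the finest such
tolerance relation. -/
theorem block_relations_imploding_interval [Finite G] [Finite M] (I : G → M → Prop)
    (c₁ c₂ : Concept G M I) (hc : c₁ ≤ c₂)
    (Jt : G → M → Prop) (hJt : ∀ g m, Jt g m ↔ (I g m ∨ (g ∈ c₂.extent ∧ m ∈ c₁.intent))) :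
    (∀ J : G → M → Prop, IsBlockRel I J →
      ((∀ g m, Jt g m → J g m) ↔
        ∀ c ∈ Set.Icc c₁ c₂, ∀ d ∈ Set.Icc c₁ c₂, tolOf I J c d)) ∧
    (∃ J₀ : G → M → Prop, IsBlockRel I J₀ ∧ (∀ g m, Jt g m → J₀ g m) ∧
      ∀ J : G → M → Prop, IsBlockRel I J → (∀ g m, Jt g m → J g m) →
        (∀ g m, J₀ g m → J g m) ∧ (∀ c d, tolOf I J₀ c d → tolOf I J c d)) :=
  block_relations_imploding_interval_general I c₁ c₂ hc Jt hJt
end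

section
/- Let L be a finite lattice, K = (L, L, ≤) its generic context, and S = [(A,B),(C,D)] a nested interval of B(K) ≅ L. Then the concept lattice of the enriched context K_S = (L, L, ≤ ∪ (C × B)) is not isomorphic to the factor poset L/θ_S, but is isomorphic to the Dedekind–MacNeille completion of (L/θ_S, ≤_θ). -/
open Classical

variable {L : Type*}

/-- The enrichment `≤ ∪ (C × B)` of the incidence relation of the generic context `(L, L, ≤)`
by the interval `[(A,B),(C,D)]` of its concept lattice corresponding to the interval `[a,b]`
of `L` (here `C = ↓b` and `B = ↑a`). -/
def enr [Preorder L] (a b : L) (x y : L) : Prop := x ≤ y ∨ (x ≤ b ∧ a ≤ y)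

/-!
Over the interval `[a, b]` the enriched incidence `x ≤ y ∨ (x ≤ b ∧ a ≤ y)` does not distinguish
the elements of `[a, b]`, and on representatives it coincides with `≤_θ`. A concept lattice does
not change when objects and attributes are replaced by their classes under surjections compatible
with the incidence, so the enriched concept lattice is the concept lattice of `(L/θ, L/θ, ≤_θ)`.
On the other hand, `L/θ` has no joins: for the nested configuration `y = x ⊔ w`, `x = y ⊓ a'`, a
least upper bound `t` of `x` and `w` would satisfy `x ≤ t ≤ y ⊓ a' = x`, while `w ≰ x`.
-/

open Set Function

section Polar

variable {α β α' β' : Type*} {r : α → β → Prop} {r' : α' → β' → Prop} {f : α → α'} {g : β → β'}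

theorem upperPolar_eq_preimage_upperPolar_image (hr : ∀ x y, r' (f x) (g y) ↔ r x y)
    (s : Set α) : upperPolar r s = g ⁻¹' upperPolar r' (f '' s) := by
  ext y
  simp only [mem_preimage, mem_upperPolar_iff, forall_mem_image, hr]

theorem lowerPolar_eq_preimage_lowerPolar_image (hr : ∀ x y, r' (f x) (g y) ↔ r x y)
    (t : Set β) : lowerPolar r t = f ⁻¹' lowerPolar r' (g '' t) := by
  ext x
  simp only [mem_preimage, mem_lowerPolar_iff, forall_mem_image, hr]

namespace Concept

theorem preimage_image_extent (hr : ∀ x y, r' (f x) (g y) ↔ r x y) (c : Concept α β r) :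
    f ⁻¹' (f '' c.extent) = c.extent := by
  rw [← c.lowerPolar_intent, lowerPolar_eq_preimage_lowerPolar_image hr, preimage_image_preimage]

def map (hr : ∀ x y, r' (f x) (g y) ↔ r x y) (hf : Surjective f) (hg : Surjective g)
    (c : Concept α β r) : Concept α' β' r' where
  extent := f '' c.extent
  intent := g '' c.intent
  upperPolar_extent := by
    rw [← c.upperPolar_extent, upperPolar_eq_preimage_upperPolar_image hr, image_preimage_eq _ hg]
  lowerPolar_intent := by
    rw [← c.lowerPolar_intent, lowerPolar_eq_preimage_lowerPolar_image hr, image_preimage_eq _ hf]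

def comap (hr : ∀ x y, r' (f x) (g y) ↔ r x y) (hf : Surjective f) (hg : Surjective g)
    (d : Concept α' β' r') : Concept α β r where
  extent := f ⁻¹' d.extent
  intent := g ⁻¹' d.intent
  upperPolar_extent := by
    rw [upperPolar_eq_preimage_upperPolar_image hr, image_preimage_eq _ hf, d.upperPolar_extent]
  lowerPolar_intent := by
    rw [lowerPolar_eq_preimage_lowerPolar_image hr, image_preimage_eq _ hg, d.lowerPolar_intent]

def orderIsoOfSurjective (hr : ∀ x y, r' (f x) (g y) ↔ r x y) (hf : Surjective f)
    (hg : Surjective g) : Concept α β r ≃o Concept α' β' r' where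
  toFun := map hr hf hg
  invFun := comap hr hf hg
  left_inv c := Concept.ext (preimage_image_extent hr c)
  right_inv d := Concept.ext (image_preimage_eq d.extent hf)
  map_rel_iff' {c d} := by
    rw [← extent_subset_extent_iff, ← extent_subset_extent_iff]
    change f '' c.extent ⊆ f '' d.extent ↔ _
    rw [image_subset_iff, preimage_image_extent hr]

end Concept

end Polar

section BinaryJoins

def HasBinaryJoins {β : Type*} (r : β → β → Prop) : Prop :=
  ∀ p q, ∃ t, r p t ∧ r q t ∧ ∀ s, r p s → r q s → r t s

theorem hasBinaryJoins_of_equiv {α β : Type*} [SemilatticeSup α] {r : β → β → Prop} (e : α ≃ β)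
    (he : ∀ c d, c ≤ d ↔ r (e c) (e d)) : HasBinaryJoins r := by
  have he' : ∀ p q, r p q ↔ e.symm p ≤ e.symm q := fun p q => by
    rw [he, e.apply_symm_apply, e.apply_symm_apply]
  intro p q
  refine ⟨e (e.symm p ⊔ e.symm q), ?_, ?_, fun s hps hqs => ?_⟩
  · rw [he', e.symm_apply_apply]; exact le_sup_left
  · rw [he', e.symm_apply_apply]; exact le_sup_right
  · rw [he', e.symm_apply_apply]; exact sup_le ((he' p s).1 hps) ((he' q s).1 hqs)

theorem HasBinaryJoins.comap {α β : Type*} {r : α → α → Prop} {r' : β → β → Prop} {f : α → β}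
    (h : HasBinaryJoins r') (hf : Surjective f) (hr : ∀ x y, r' (f x) (f y) ↔ r x y) :
    HasBinaryJoins r := by
  intro p q
  obtain ⟨t, hpt, hqt, ht⟩ := h (f p) (f q)
  obtain ⟨t, rfl⟩ := hf t
  exact ⟨t, (hr p t).1 hpt, (hr q t).1 hqt,
    fun s hps hqs => (hr t s).1 (ht (f s) ((hr p s).2 hps) ((hr q s).2 hqs))⟩

end BinaryJoins

section Preorder

variable [Preorder L] {a b x x' y y' : L}

theorem le_right_of_mem_iSdown (hx : x ∈ iSdown a b) : x ≤ b := by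
  obtain ⟨-, s, hs, hxs⟩ := hx
  exact hxs.le.trans hs.2

theorem left_le_of_mem_iSupSet (hx : x ∈ iSupSet a b) : a ≤ x := by
  obtain ⟨-, s, hs, hsx⟩ := hx
  exact hs.1.trans hsx.le

theorem enr_iff_of_mem_Icc_left (hx : x ∈ Icc a b) : enr a b x y ↔ a ≤ y :=
  ⟨fun h => h.elim (hx.1.trans ·) (·.2), fun hay => Or.inr ⟨hx.2, hay⟩⟩

theorem enr_iff_of_mem_Icc_right (hy : y ∈ Icc a b) : enr a b x y ↔ x ≤ b :=
  ⟨fun h => h.elim (·.trans hy.2) (·.1), fun hxb => Or.inr ⟨hxb, hy.1⟩⟩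

theorem enr_iff_le_of_not_le_right (hx : ¬ x ≤ b) : enr a b x y ↔ x ≤ y :=
  or_iff_left fun h => hx h.1

theorem enr_congr_left (h : irel a b x x') : enr a b x y ↔ enr a b x' y := by
  rcases h with rfl | ⟨hx, hx'⟩
  · rfl
  · rw [enr_iff_of_mem_Icc_left hx, enr_iff_of_mem_Icc_left hx']

theorem enr_congr_right (h : irel a b y y') : enr a b x y ↔ enr a b x y' := by
  rcases h with rfl | ⟨hy, hy'⟩
  · rfl
  · rw [enr_iff_of_mem_Icc_right hy, enr_iff_of_mem_Icc_right hy']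

end Preorder

section PartialOrder

variable [PartialOrder L] {a b x y : L}

theorem mem_iSdown_iff_s17 (hab : a ≤ b) (hx : x ∉ Icc a b) : x ∈ iSdown a b ↔ x ≤ b :=
  ⟨le_right_of_mem_iSdown, fun hxb =>
    ⟨hx, b, ⟨hab, le_rfl⟩, hxb.lt_of_ne (by rintro rfl; exact hx ⟨hab, le_rfl⟩)⟩⟩

theorem mem_iSupSet_iff_s17 (hab : a ≤ b) (hx : x ∉ Icc a b) : x ∈ iSupSet a b ↔ a ≤ x :=
  ⟨left_le_of_mem_iSupSet, fun hax =>
    ⟨hx, a, ⟨le_rfl, hab⟩, hax.lt_of_ne (by rintro rfl; exact hx ⟨le_rfl, hab⟩)⟩⟩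

theorem not_le_right_of_mem_iSpar (hab : a ≤ b) (hx : x ∈ iSpar a b) : ¬ x ≤ b := fun hxb =>
  (hx.2 b ⟨hab, le_rfl⟩).2 (hxb.lt_of_ne (by rintro rfl; exact hx.1 ⟨hab, le_rfl⟩))

theorem not_left_le_of_mem_iSpar (hab : a ≤ b) (hx : x ∈ iSpar a b) : ¬ a ≤ x := fun hax =>
  (hx.2 a ⟨le_rfl, hab⟩).1 (hax.lt_of_ne (by rintro rfl; exact hx.1 ⟨le_rfl, hab⟩))

theorem ile_iff_enr (hab : a ≤ b) : ile a b x y ↔ enr a b x y := by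
  by_cases hx : x ∈ Icc a b
  · have hxd : x ∉ iSdown a b := fun h => h.1 hx
    by_cases hy : y ∈ Icc a b
    · simp only [ile, ilow, ihigh, if_pos hx, if_pos hy, hxd, false_and, or_false,
        enr_iff_of_mem_Icc_left hx, hy.1, hab]
    · simp only [ile, ilow, ihigh, if_pos hx, if_neg hy, hxd, false_and, or_false,
        enr_iff_of_mem_Icc_left hx]
  · by_cases hy : y ∈ Icc a b
    · have hyu : y ∉ iSupSet a b := fun h => h.1 hy
      simp only [ile, ilow, ihigh, if_neg hx, if_pos hy, hyu, and_false, or_false,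
        enr_iff_of_mem_Icc_right hy]
    · simp only [ile, ilow, ihigh, if_neg hx, if_neg hy, mem_iSdown_iff_s17 hab hx,
        mem_iSupSet_iff_s17 hab hy, enr]

theorem iLeQ_mk_mk (hab : a ≤ b) (x y : L) :
    iLeQ a b (Quotient.mk (irelSetoid a b) x) (Quotient.mk (irelSetoid a b) y) ↔ enr a b x y := by
  constructor
  · rintro ⟨x', y', hx, hy, h⟩
    rw [enr_congr_left (Quotient.exact hx), enr_congr_right (Quotient.exact hy)]
    exact (ile_iff_enr hab).1 h
  · exact fun h => ⟨x, y, rfl, rfl, (ile_iff_enr hab).2 h⟩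

end PartialOrder

theorem not_hasBinaryJoins_enr [Lattice L] {a b : L} (hab : a ≤ b) (h : iNested a b) :
    ¬ HasBinaryJoins (enr a b) := by
  obtain ⟨x, -, a', w, hx, -, ha', hw, rfl, hx_eq, -, hwx⟩ := h
  intro hjoins
  obtain ⟨t, hxt, hwt, ht⟩ := hjoins x w
  have hxb := not_le_right_of_mem_iSpar hab hx
  have hx_le_t : x ≤ t := (enr_iff_le_of_not_le_right hxb).1 hxt
  have htb : ¬ t ≤ b := fun htb => hxb (hx_le_t.trans htb)
  have ht_le_y : t ≤ x ⊔ w := (enr_iff_le_of_not_le_right htb).1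
    (ht _ (Or.inl le_sup_left) (Or.inl le_sup_right))
  have ht_le_a' : t ≤ a' := (enr_iff_le_of_not_le_right htb).1
    (ht _ (Or.inl (hx_eq ▸ inf_le_right))
      (Or.inr ⟨le_right_of_mem_iSdown hw, left_le_of_mem_iSupSet ha'⟩))
  have htx : t = x := le_antisymm (hx_eq ▸ le_inf ht_le_y ht_le_a') hx_le_t
  subst htx
  exact hwt.elim hwx fun h => not_left_le_of_mem_iSpar hab hx h.2

theorem enriched_concept_lattice_iso_dedekind_macneille_general {L : Type*} [Lattice L]
    (a b : L) (hab : a ≤ b) (hnested : iNested a b) :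
    (¬ ∃ e : Concept L L (enr a b) ≃ Quotient (irelSetoid a b),
      ∀ c d : Concept L L (enr a b), c ≤ d ↔ iLeQ a b (e c) (e d)) ∧
    (∃ e : Concept L L (enr a b) ≃
        Concept (Quotient (irelSetoid a b)) (Quotient (irelSetoid a b)) (iLeQ a b),
      ∀ c d : Concept L L (enr a b), c ≤ d ↔ e c ≤ e d) := by
  refine ⟨fun ⟨e, he⟩ => not_hasBinaryJoins_enr hab hnested ?_, ?_⟩
  · exact (hasBinaryJoins_of_equiv e he).comap Quotient.mk_surjective (iLeQ_mk_mk hab)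
  · let e := Concept.orderIsoOfSurjective (iLeQ_mk_mk hab) Quotient.mk_surjective
      Quotient.mk_surjective
    exact ⟨e.toEquiv, fun c d => e.le_iff_le.symm⟩

/-- If `S` is a nested interval of a finite lattice `L`, then the concept
lattice of the enriched generic context is not isomorphic to the factor poset `(L/θ_S, ≤_θ)`,
but is isomorphic to its Dedekind–MacNeille completion, i.e. the concept lattice of the
context `(L/θ_S, L/θ_S, ≤_θ)`. -/
theorem enriched_concept_lattice_iso_dedekind_macneille {L : Type*} [Lattice L] [Finite L]
    (a b : L) (hab : a ≤ b) (hnested : iNested a b) :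
    (¬ ∃ e : Concept L L (enr a b) ≃ Quotient (irelSetoid a b),
      ∀ c d : Concept L L (enr a b), c ≤ d ↔ iLeQ a b (e c) (e d)) ∧
    (∃ e : Concept L L (enr a b) ≃
        Concept (Quotient (irelSetoid a b)) (Quotient (irelSetoid a b)) (iLeQ a b),
      ∀ c d : Concept L L (enr a b), c ≤ d ↔ e c ≤ e d) :=
  enriched_concept_lattice_iso_dedekind_macneille_general a b hab hnested
end

section
/- Let K = (G,M,I) be a finite reduced formal context and S = [(A,B),(C,D)] an interval of the concept lattice B(K). Among all complete congruence relations θ on B(K) having a congruence class containing S, there exists a unique finest one, and it corresponds (under the dual isomorphism between compatible subcontexts and complete congruences) to the largest compatible subcontext [O,P] of K with O contained in the set A ∪ {g ∈ G | g ∉ C} and P contained in D ∪ {m ∈ M | m ∉ B}. -/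
variable {G M : Type*}

/-- `θ` is a complete congruence on the concept lattice: an equivalence relation compatible
with arbitrary suprema and infima of families of related pairs. -/
def IsCompleteCongruence (I : G → M → Prop) (θ : Concept G M I → Concept G M I → Prop) : Prop :=
  Equivalence θ ∧
    ∀ T : Set (Concept G M I × Concept G M I), (∀ p ∈ T, θ p.1 p.2) →
      θ (sSup (Prod.fst '' T)) (sSup (Prod.snd '' T)) ∧
      θ (sInf (Prod.fst '' T)) (sInf (Prod.snd '' T))

/-- `[H,N]` is a compatible subcontext of `(G,M,I)`: for every concept `(X,Y)` of the context,
`(X ∩ H, Y ∩ N)` is a concept of the subcontext `(H, N, I ∩ (H × N))`. -/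
def IsCompatibleSubcontext (I : G → M → Prop) (H : Set G) (N : Set M) : Prop :=
  ∀ c : Concept G M I,
    (c.intent ∩ N = {n | n ∈ N ∧ ∀ g ∈ c.extent ∩ H, I g n}) ∧
    (c.extent ∩ H = {g | g ∈ H ∧ ∀ m ∈ c.intent ∩ N, I g m})

/-- The complete congruence corresponding to the compatible subcontext `[H,N]`:
two concepts are related iff they have the same trace on the subcontext. -/
def congOf (I : G → M → Prop) (H : Set G) (N : Set M)
    (c d : Concept G M I) : Prop :=
  c.extent ∩ H = d.extent ∩ H ∧ c.intent ∩ N = d.intent ∩ N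

set_option linter.unusedSectionVars false
namespace Impl19
open Set Concept

variable {I : G → M → Prop}

/-- object concept -/
def γc (I : G → M → Prop) (g : G) : Concept G M I :=
  ⟨lowerPolar I (upperPolar I {g}), upperPolar I {g},
    upperPolar_lowerPolar_upperPolar _ _, rfl⟩

/-- attribute concept -/
def μc (I : G → M → Prop) (m : M) : Concept G M I :=
  ⟨lowerPolar I {m}, upperPolar I (lowerPolar I {m}),
    rfl, lowerPolar_upperPolar_lowerPolar _ _⟩

lemma rel_of_mem {c : Concept G M I} {g m} (hg : g ∈ c.extent) (hm : m ∈ c.intent) : I g m := by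
  rw [← c.upperPolar_extent] at hm; exact hm hg

lemma mem_gamma (g : G) : g ∈ (γc I g).extent :=
  subset_lowerPolar_upperPolar I {g} rfl

lemma gamma_le_iff {g : G} {c : Concept G M I} : γc I g ≤ c ↔ g ∈ c.extent := by
  constructor
  · intro h; exact h (mem_gamma g)
  · intro hg
    show (γc I g).extent ⊆ c.extent
    rw [← c.lowerPolar_intent]
    refine lowerPolar_anti I ?_
    rw [← c.upperPolar_extent]
    exact upperPolar_anti I (singleton_subset_iff.2 hg)

lemma le_mu_iff {m : M} {c : Concept G M I} : c ≤ μc I m ↔ m ∈ c.intent := by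
  rw [← c.upperPolar_extent]
  constructor
  · intro h g hg
    exact (h hg) rfl
  · intro h g hg b hb
    cases hb; exact h hg

lemma gamma_le_mu_iff {g : G} {m : M} : γc I g ≤ μc I m ↔ I g m := by
  rw [gamma_le_iff]
  constructor
  · intro h; exact h rfl
  · intro h b hb; cases hb; exact h

lemma sSup_gamma (c : Concept G M I) : sSup (γc I '' c.extent) = c := by
  refine le_antisymm (sSup_le ?_) ?_
  · rintro x ⟨g, hg, rfl⟩; exact gamma_le_iff.2 hg
  · intro g hg
    exact gamma_le_iff.1 (le_sSup ⟨g, hg, rfl⟩)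

lemma sInf_mu (c : Concept G M I) : sInf (μc I '' c.intent) = c := by
  refine le_antisymm ?_ (le_sInf ?_)
  · refine intent_subset_intent_iff.1 ?_
    intro m hm
    exact le_mu_iff.1 (sInf_le ⟨m, hm, rfl⟩)
  · rintro x ⟨m, hm, rfl⟩; exact le_mu_iff.2 hm

section Cong

variable {θ' : Concept G M I → Concept G M I → Prop}

lemma cong_pair (hθ : IsCompleteCongruence I θ') {ι : Type*} (S : Set ι)
    (f g : ι → Concept G M I) (h : ∀ i ∈ S, θ' (f i) (g i)) :
    θ' (sSup (f '' S)) (sSup (g '' S)) ∧ θ' (sInf (f '' S)) (sInf (g '' S)) := by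
  have := hθ.2 ((fun i => (f i, g i)) '' S) (by rintro p ⟨i, hi, rfl⟩; exact h i hi)
  simpa [Set.image_image] using this

/-- the minimum of the congruence class -/
def pi (θ' : Concept G M I → Concept G M I → Prop) (c : Concept G M I) : Concept G M I :=
  sInf {d | θ' c d}

/-- the maximum of the congruence class -/
def sig (θ' : Concept G M I → Concept G M I → Prop) (c : Concept G M I) : Concept G M I :=
  sSup {d | θ' c d}

lemma pi_le (hθ : IsCompleteCongruence I θ') (c : Concept G M I) : pi θ' c ≤ c :=
  sInf_le (hθ.1.refl c)

lemma le_sig (hθ : IsCompleteCongruence I θ') (c : Concept G M I) : c ≤ sig θ' c :=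
  le_sSup (hθ.1.refl c)

lemma pi_min {c d : Concept G M I} (h : θ' c d) : pi θ' c ≤ d := sInf_le h

lemma sig_max {c d : Concept G M I} (h : θ' c d) : d ≤ sig θ' c := le_sSup h

lemma class_eq (hθ : IsCompleteCongruence I θ') {c d : Concept G M I} (h : θ' c d) :
    {e | θ' c e} = {e | θ' d e} := by
  ext e; exact ⟨fun h' => hθ.1.trans (hθ.1.symm h) h', fun h' => hθ.1.trans h h'⟩

lemma pi_eq_of (hθ : IsCompleteCongruence I θ') {c d : Concept G M I} (h : θ' c d) :
    pi θ' c = pi θ' d := congrArg sInf (class_eq hθ h)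

lemma sig_eq_of (hθ : IsCompleteCongruence I θ') {c d : Concept G M I} (h : θ' c d) :
    sig θ' c = sig θ' d := congrArg sSup (class_eq hθ h)

lemma theta_pi (hθ : IsCompleteCongruence I θ') (c : Concept G M I) : θ' c (pi θ' c) := by
  have h := (cong_pair hθ {d | θ' c d} id (fun _ => c) (fun i hi => hθ.1.symm hi)).2
  rw [Set.image_id, Set.Nonempty.image_const (⟨c, hθ.1.refl c⟩ : Set.Nonempty {d | θ' c d}) c, sInf_singleton] at h
  exact hθ.1.symm h

lemma theta_sig (hθ : IsCompleteCongruence I θ') (c : Concept G M I) : θ' c (sig θ' c) := by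
  have h := (cong_pair hθ {d | θ' c d} id (fun _ => c) (fun i hi => hθ.1.symm hi)).1
  rw [Set.image_id, Set.Nonempty.image_const (⟨c, hθ.1.refl c⟩ : Set.Nonempty {d | θ' c d}) c, sSup_singleton] at h
  exact hθ.1.symm h

lemma pi_idem (hθ : IsCompleteCongruence I θ') (c : Concept G M I) :
    pi θ' (pi θ' c) = pi θ' c := (pi_eq_of hθ (theta_pi hθ c)).symm

lemma sig_idem (hθ : IsCompleteCongruence I θ') (c : Concept G M I) :
    sig θ' (sig θ' c) = sig θ' c := (sig_eq_of hθ (theta_sig hθ c)).symm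

lemma pi_mono (hθ : IsCompleteCongruence I θ') {c d : Concept G M I} (hcd : c ≤ d) :
    pi θ' c ≤ pi θ' d := by
  have h := (cong_pair hθ {c, d} id (pi θ') (fun i _ => theta_pi hθ i)).2
  rw [Set.image_id, Set.image_pair, sInf_pair, sInf_pair, inf_eq_left.2 hcd] at h
  exact (pi_min h).trans inf_le_right

lemma sig_mono (hθ : IsCompleteCongruence I θ') {c d : Concept G M I} (hcd : c ≤ d) :
    sig θ' c ≤ sig θ' d := by
  have h := (cong_pair hθ {c, d} id (sig θ') (fun i _ => theta_sig hθ i)).1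
  rw [Set.image_id, Set.image_pair, sSup_pair, sSup_pair, sup_eq_right.2 hcd] at h
  exact le_sup_left.trans (sig_max h)

lemma cong_two (hθ : IsCompleteCongruence I θ') {a b a' b' : Concept G M I}
    (h1 : θ' a b) (h2 : θ' a' b') :
    θ' (a ⊔ a') (b ⊔ b') ∧ θ' (a ⊓ a') (b ⊓ b') := by
  have := hθ.2 {(a, b), (a', b')} (by
    rintro p hp
    rcases hp with rfl | hp
    · exact h1
    · rcases hp with rfl; exact h2)
  simpa [Set.image_insert_eq, Set.image_singleton] using this

/-- the object part of the compatible subcontext associated to a congruence -/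
def Hset (θ' : Concept G M I → Concept G M I → Prop) : Set G :=
  {g | pi θ' (γc I g) = γc I g}

/-- the attribute part of the compatible subcontext associated to a congruence -/
def Nset (θ' : Concept G M I → Concept G M I → Prop) : Set M :=
  {m | sig θ' (μc I m) = μc I m}


section Fin
variable [Finite G] [Finite M]

omit [Finite M] in
lemma finConcept : Finite (Concept G M I) := Finite.of_injective _ Concept.extent_injective

lemma pi_fixed_eq (hθ : IsCompleteCongruence I θ') :
    ∀ e : Concept G M I, pi θ' e = e → e = sSup (γc I '' (e.extent ∩ Hset θ')) := by
  haveI : Finite (Concept G M I) := finConcept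
  haveI : WellFoundedLT (Concept G M I) := Finite.to_wellFoundedLT
  intro e
  induction e using WellFoundedLT.induction with
  | _ e IH =>
    intro he
    have hs_le : sSup (γc I '' (e.extent ∩ Hset θ')) ≤ e := by
      refine sSup_le ?_
      rintro x ⟨g, ⟨hg, _⟩, rfl⟩
      exact gamma_le_iff.2 hg
    have hsup := (cong_pair hθ e.extent (γc I) (fun g => pi θ' (γc I g))
      (fun g _ => theta_pi hθ (γc I g))).1
    rw [sSup_gamma] at hsup
    have hef : e ≤ sSup ((fun g => pi θ' (γc I g)) '' e.extent) := by
      have := pi_min hsup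
      rwa [he] at this
    have hfs : sSup ((fun g => pi θ' (γc I g)) '' e.extent) ≤ sSup (γc I '' (e.extent ∩ Hset θ')) := by
      refine sSup_le ?_
      rintro x ⟨g, hg, rfl⟩
      dsimp only
      by_cases hgH : g ∈ Hset θ'
      · rw [show pi θ' (γc I g) = γc I g from hgH]
        exact le_sSup ⟨g, ⟨hg, hgH⟩, rfl⟩
      · have h1 : pi θ' (γc I g) ≤ e := (pi_le hθ _).trans (gamma_le_iff.2 hg)
        have hlt : pi θ' (γc I g) < e := by
          refine lt_of_le_of_ne h1 ?_
          intro heq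
          have h2 : γc I g = e :=
            le_antisymm (gamma_le_iff.2 hg) (heq ▸ pi_le hθ (γc I g))
          exact hgH (heq.trans h2.symm)
        have h3 := IH _ hlt (pi_idem hθ (γc I g))
        rw [h3]
        refine sSup_le_sSup (Set.image_mono (Set.inter_subset_inter_left _ ?_))
        exact hlt.le
    exact le_antisymm (hef.trans hfs) hs_le

lemma pi_trace (hθ : IsCompleteCongruence I θ') (c : Concept G M I) :
    pi θ' c = sSup (γc I '' (c.extent ∩ Hset θ')) := by
  have h1 := pi_fixed_eq hθ (pi θ' c) (pi_idem hθ c)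
  have h2 : (pi θ' c).extent ∩ Hset θ' = c.extent ∩ Hset θ' := by
    ext g
    constructor
    · rintro ⟨hg, hH⟩
      exact ⟨pi_le hθ c hg, hH⟩
    · rintro ⟨hg, hH⟩
      refine ⟨?_, hH⟩
      have h3 : γc I g ≤ pi θ' c := by
        have := pi_mono hθ (gamma_le_iff.2 hg : γc I g ≤ c)
        rwa [show pi θ' (γc I g) = γc I g from hH] at this
      exact gamma_le_iff.1 h3
  rw [h1, h2]

lemma sig_fixed_eq (hθ : IsCompleteCongruence I θ') :
    ∀ e : Concept G M I, sig θ' e = e → e = sInf (μc I '' (e.intent ∩ Nset θ')) := by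
  haveI : Finite (Concept G M I) := finConcept
  haveI : WellFoundedGT (Concept G M I) := Finite.to_wellFoundedGT
  intro e
  induction e using WellFoundedGT.induction with
  | _ e IH =>
    intro he
    have hs_ge : e ≤ sInf (μc I '' (e.intent ∩ Nset θ')) := by
      refine le_sInf ?_
      rintro x ⟨m, ⟨hm, _⟩, rfl⟩
      exact le_mu_iff.2 hm
    have hinf := (cong_pair hθ e.intent (μc I) (fun m => sig θ' (μc I m))
      (fun m _ => theta_sig hθ (μc I m))).2
    rw [sInf_mu] at hinf
    have hef : sInf ((fun m => sig θ' (μc I m)) '' e.intent) ≤ e := by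
      have := sig_max hinf
      rwa [he] at this
    have hfs : sInf (μc I '' (e.intent ∩ Nset θ')) ≤ sInf ((fun m => sig θ' (μc I m)) '' e.intent) := by
      refine le_sInf ?_
      rintro x ⟨m, hm, rfl⟩
      dsimp only
      by_cases hmN : m ∈ Nset θ'
      · rw [show sig θ' (μc I m) = μc I m from hmN]
        exact sInf_le ⟨m, ⟨hm, hmN⟩, rfl⟩
      · have h1 : e ≤ sig θ' (μc I m) := (le_mu_iff.2 hm).trans (le_sig hθ _)
        have hlt : e < sig θ' (μc I m) := by
          refine lt_of_le_of_ne h1 ?_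
          intro heq
          have h2 : μc I m = e :=
            le_antisymm (heq ▸ le_sig hθ (μc I m)) (le_mu_iff.2 hm)
          exact hmN (heq.symm.trans h2.symm)
        have h3 := IH _ hlt (sig_idem hθ (μc I m))
        rw [h3]
        refine sInf_le_sInf (Set.image_mono (Set.inter_subset_inter_left _ ?_))
        exact intent_subset_intent_iff.2 hlt.le
    exact le_antisymm hs_ge (hfs.trans hef)

lemma sig_trace (hθ : IsCompleteCongruence I θ') (c : Concept G M I) :
    sig θ' c = sInf (μc I '' (c.intent ∩ Nset θ')) := by
  have h1 := sig_fixed_eq hθ (sig θ' c) (sig_idem hθ c)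
  have h2 : (sig θ' c).intent ∩ Nset θ' = c.intent ∩ Nset θ' := by
    ext m
    constructor
    · rintro ⟨hm, hN⟩
      exact ⟨intent_subset_intent_iff.2 (le_sig hθ c) hm, hN⟩
    · rintro ⟨hm, hN⟩
      refine ⟨?_, hN⟩
      have h3 : sig θ' c ≤ μc I m := by
        have := sig_mono hθ (le_mu_iff.2 hm : c ≤ μc I m)
        rwa [show sig θ' (μc I m) = μc I m from hN] at this
      exact le_mu_iff.1 h3
  rw [h1, h2]


lemma HN_compatible (hθ : IsCompleteCongruence I θ') :
    IsCompatibleSubcontext I (Hset θ') (Nset θ') := by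
  intro c
  constructor
  · ext n
    simp only [Set.mem_inter_iff, Set.mem_setOf_eq]
    constructor
    · rintro ⟨hn, hN⟩
      exact ⟨hN, fun g hg => rel_of_mem hg.1 hn⟩
    · rintro ⟨hN, hfor⟩
      refine ⟨?_, hN⟩
      have h1 : sSup (γc I '' (c.extent ∩ Hset θ')) ≤ μc I n := by
        refine sSup_le ?_
        rintro x ⟨g, hg, rfl⟩
        exact gamma_le_mu_iff.2 (hfor g hg)
      have h2 : pi θ' c ≤ μc I n := by rw [pi_trace hθ c]; exact h1
      have h3 : c ≤ μc I n :=
        calc c ≤ sig θ' c := le_sig hθ c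
          _ = sig θ' (pi θ' c) := sig_eq_of hθ (theta_pi hθ c)
          _ ≤ sig θ' (μc I n) := sig_mono hθ h2
          _ = μc I n := hN
      exact le_mu_iff.1 h3
  · ext g
    simp only [Set.mem_inter_iff, Set.mem_setOf_eq]
    constructor
    · rintro ⟨hg, hH⟩
      exact ⟨hH, fun m hm => rel_of_mem hg hm.1⟩
    · rintro ⟨hH, hfor⟩
      refine ⟨?_, hH⟩
      have h1 : γc I g ≤ sInf (μc I '' (c.intent ∩ Nset θ')) := by
        refine le_sInf ?_
        rintro x ⟨m, hm, rfl⟩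
        exact gamma_le_mu_iff.2 (hfor m hm)
      have h2 : γc I g ≤ sig θ' c := by rw [sig_trace hθ c]; exact h1
      have h3 : γc I g ≤ c :=
        calc γc I g = pi θ' (γc I g) := hH.symm
          _ ≤ pi θ' (sig θ' c) := pi_mono hθ h2
          _ = pi θ' c := (pi_eq_of hθ (theta_sig hθ c)).symm
          _ ≤ c := pi_le hθ c
      exact gamma_le_iff.1 h3

lemma H_constraint {c₁ c₂ : Concept G M I} (hθ : IsCompleteCongruence I θ')
    (h12 : θ' c₁ c₂) : Hset θ' ⊆ c₁.extent ∪ {g | g ∉ c₂.extent} := by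
  intro g hg
  by_cases h2 : g ∈ c₂.extent
  · left
    have h := (cong_two hθ h12 (hθ.1.refl (γc I g))).2
    rw [inf_eq_right.2 (gamma_le_iff.2 h2)] at h
    have h3 : pi θ' (γc I g) ≤ c₁ ⊓ γc I g := pi_min (hθ.1.symm h)
    rw [show pi θ' (γc I g) = γc I g from hg] at h3
    exact gamma_le_iff.1 (h3.trans inf_le_left)
  · right; exact h2

lemma N_constraint {c₁ c₂ : Concept G M I} (hθ : IsCompleteCongruence I θ')
    (h12 : θ' c₁ c₂) : Nset θ' ⊆ c₂.intent ∪ {m | m ∉ c₁.intent} := by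
  intro m hm
  by_cases h1 : m ∈ c₁.intent
  · left
    have h := (cong_two hθ h12 (hθ.1.refl (μc I m))).1
    rw [sup_eq_right.2 (le_mu_iff.2 h1)] at h
    have h3 : c₂ ⊔ μc I m ≤ sig θ' (μc I m) := sig_max h
    rw [show sig θ' (μc I m) = μc I m from hm] at h3
    exact le_mu_iff.1 (le_sup_left.trans h3)
  · right; exact h1

lemma trace_theta (hθ : IsCompleteCongruence I θ') {c d : Concept G M I}
    (h : c.extent ∩ Hset θ' = d.extent ∩ Hset θ') : θ' c d := by
  have hpi : pi θ' c = pi θ' d := by rw [pi_trace hθ, pi_trace hθ, h]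
  exact hθ.1.trans (hpi ▸ theta_pi hθ c) (hθ.1.symm (theta_pi hθ d))

end Fin
end Cong

section CongOf

lemma fst_trace_of_snd {O : Set G} {P : Set M} (hcomp : IsCompatibleSubcontext I O P)
    {c d : Concept G M I} (h : c.intent ∩ P = d.intent ∩ P) : c.extent ∩ O = d.extent ∩ O := by
  rw [(hcomp c).2, (hcomp d).2, h]

lemma snd_trace_of_fst {O : Set G} {P : Set M} (hcomp : IsCompatibleSubcontext I O P)
    {c d : Concept G M I} (h : c.extent ∩ O = d.extent ∩ O) : c.intent ∩ P = d.intent ∩ P := by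
  rw [(hcomp c).1, (hcomp d).1, h]

lemma sSup_snd_inter {S : Set (Concept G M I)} {P : Set M} (hne : S.Nonempty) :
    (sSup S).intent ∩ P = ⋂ c ∈ S, (c.intent ∩ P) := by
  have h : (sSup S).intent = ⋂ c ∈ S, c.intent := rfl
  rw [h]
  ext n
  simp only [Set.mem_inter_iff, Set.mem_iInter]
  constructor
  · rintro ⟨h1, h2⟩ c hcS
    exact ⟨h1 c hcS, h2⟩
  · intro h'
    obtain ⟨c0, hc0⟩ := hne
    exact ⟨fun c hcS => (h' c hcS).1, (h' c0 hc0).2⟩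

lemma sInf_fst_inter {S : Set (Concept G M I)} {O : Set G} (hne : S.Nonempty) :
    (sInf S).extent ∩ O = ⋂ c ∈ S, (c.extent ∩ O) := by
  have h : (sInf S).extent = ⋂ c ∈ S, c.extent := rfl
  rw [h]
  ext g
  simp only [Set.mem_inter_iff, Set.mem_iInter]
  constructor
  · rintro ⟨h1, h2⟩ c hcS
    exact ⟨h1 c hcS, h2⟩
  · intro h'
    obtain ⟨c0, hc0⟩ := hne
    exact ⟨fun c hcS => (h' c hcS).1, (h' c0 hc0).2⟩

lemma congOf_cong {O : Set G} {P : Set M} (hcomp : IsCompatibleSubcontext I O P) :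
    IsCompleteCongruence I (congOf I O P) := by
  constructor
  · exact ⟨fun c => ⟨rfl, rfl⟩, fun h => ⟨h.1.symm, h.2.symm⟩,
      fun h h' => ⟨h.1.trans h'.1, h.2.trans h'.2⟩⟩
  · intro T hT
    rcases T.eq_empty_or_nonempty with rfl | hne
    · simp only [Set.image_empty]
      exact ⟨⟨rfl, rfl⟩, ⟨rfl, rfl⟩⟩
    · constructor
      · have e1 : (sSup (Prod.fst '' T)).intent ∩ P = (sSup (Prod.snd '' T)).intent ∩ P := by
          rw [sSup_snd_inter (hne.image _), sSup_snd_inter (hne.image _),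
            Set.biInter_image, Set.biInter_image]
          exact Set.iInter₂_congr fun p hp => by rw [(hT p hp).2]
        exact ⟨fst_trace_of_snd hcomp e1, e1⟩
      · have e1 : (sInf (Prod.fst '' T)).extent ∩ O = (sInf (Prod.snd '' T)).extent ∩ O := by
          rw [sInf_fst_inter (hne.image _), sInf_fst_inter (hne.image _),
            Set.biInter_image, Set.biInter_image]
          exact Set.iInter₂_congr fun p hp => by rw [(hT p hp).1]
        exact ⟨e1, snd_trace_of_fst hcomp e1⟩

lemma congOf_c12 {O : Set G} {P : Set M} {c₁ c₂ : Concept G M I} (hc : c₁ ≤ c₂)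
    (hO : O ⊆ c₁.extent ∪ {g | g ∉ c₂.extent}) (hP : P ⊆ c₂.intent ∪ {m | m ∉ c₁.intent}) :
    congOf I O P c₁ c₂ := by
  constructor
  · ext g
    simp only [Set.mem_inter_iff]
    constructor
    · rintro ⟨h1, h2⟩
      exact ⟨hc h1, h2⟩
    · rintro ⟨h1, h2⟩
      refine ⟨?_, h2⟩
      rcases hO h2 with h | h
      · exact h
      · exact absurd h1 h
  · ext m
    simp only [Set.mem_inter_iff]
    constructor
    · rintro ⟨h1, h2⟩
      refine ⟨?_, h2⟩
      rcases hP h2 with h | h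
      · exact h
      · exact absurd h1 h
    · rintro ⟨h1, h2⟩
      exact ⟨Concept.intent_subset_intent_iff.2 hc h1, h2⟩

end CongOf
end Impl19

/-- For a finite reduced context `(G,M,I)` and an interval
`S = [(A,B),(C,D)]` of its concept lattice, there is a unique finest complete congruence with a
class containing `S`, and it corresponds to the largest compatible subcontext `[O,P]` with
`O ⊆ A ∪ (G \ C)` and `P ⊆ D ∪ (M \ B)`. -/
theorem finest_congruence_imploding_interval [Finite G] [Finite M] (I : G → M → Prop)
    (hGred : ∀ (g : G) (X : Set G), g ∉ X → upperPolar I {g} ≠ upperPolar I X)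
    (hMred : ∀ (m : M) (Y : Set M), m ∉ Y → lowerPolar I {m} ≠ lowerPolar I Y)
    (c₁ c₂ : Concept G M I) (hc : c₁ ≤ c₂) :
    ∃ θ : Concept G M I → Concept G M I → Prop,
      (IsCompleteCongruence I θ ∧ ∀ c ∈ Set.Icc c₁ c₂, ∀ d ∈ Set.Icc c₁ c₂, θ c d) ∧
      (∀ θ' : Concept G M I → Concept G M I → Prop,
        IsCompleteCongruence I θ' → (∀ c ∈ Set.Icc c₁ c₂, ∀ d ∈ Set.Icc c₁ c₂, θ' c d) →
        ∀ c d, θ c d → θ' c d) ∧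
      (∃ O : Set G, ∃ P : Set M,
        IsCompatibleSubcontext I O P ∧
        O ⊆ c₁.extent ∪ {g | g ∉ c₂.extent} ∧ P ⊆ c₂.intent ∪ {m | m ∉ c₁.intent} ∧
        (∀ (O' : Set G) (P' : Set M), IsCompatibleSubcontext I O' P' →
          O' ⊆ c₁.extent ∪ {g | g ∉ c₂.extent} → P' ⊆ c₂.intent ∪ {m | m ∉ c₁.intent} →
          O' ⊆ O ∧ P' ⊆ P) ∧
        (∀ c d, θ c d ↔ congOf I O P c d)) := by
  classical
  set Fam : Set (Set G × Set M) :=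
    {q | IsCompatibleSubcontext I q.1 q.2 ∧ q.1 ⊆ c₁.extent ∪ {g | g ∉ c₂.extent} ∧
      q.2 ⊆ c₂.intent ∪ {m | m ∉ c₁.intent}} with hFam
  set O : Set G := ⋃ q ∈ Fam, q.1 with hOdef
  set P : Set M := ⋃ q ∈ Fam, q.2 with hPdef
  have hOsub : O ⊆ c₁.extent ∪ {g | g ∉ c₂.extent} := Set.iUnion₂_subset fun q hq => hq.2.1
  have hPsub : P ⊆ c₂.intent ∪ {m | m ∉ c₁.intent} := Set.iUnion₂_subset fun q hq => hq.2.2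
  have hOP : IsCompatibleSubcontext I O P := by
    intro c
    constructor
    · ext n
      simp only [Set.mem_inter_iff, Set.mem_setOf_eq]
      constructor
      · rintro ⟨hn, hnP⟩
        exact ⟨hnP, fun g hg => Impl19.rel_of_mem hg.1 hn⟩
      · rintro ⟨hnP, hfor⟩
        refine ⟨?_, hnP⟩
        obtain ⟨q, hq, hnq⟩ : ∃ q ∈ Fam, n ∈ q.2 := by
          rw [hPdef] at hnP
          simpa using hnP
        have hmem : n ∈ c.intent ∩ q.2 := by
          rw [(hq.1 c).1]
          exact ⟨hnq, fun g hg => hfor g ⟨hg.1, Set.mem_biUnion hq hg.2⟩⟩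
        exact hmem.1
    · ext g
      simp only [Set.mem_inter_iff, Set.mem_setOf_eq]
      constructor
      · rintro ⟨hg, hgO⟩
        exact ⟨hgO, fun m hm => Impl19.rel_of_mem hg hm.1⟩
      · rintro ⟨hgO, hfor⟩
        refine ⟨?_, hgO⟩
        obtain ⟨q, hq, hgq⟩ : ∃ q ∈ Fam, g ∈ q.1 := by
          rw [hOdef] at hgO
          simpa using hgO
        have hmem : g ∈ c.extent ∩ q.1 := by
          rw [(hq.1 c).2]
          exact ⟨hgq, fun m hm => hfor m ⟨hm.1, Set.mem_biUnion hq hm.2⟩⟩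
        exact hmem.1
  have hmax : ∀ (O' : Set G) (P' : Set M), IsCompatibleSubcontext I O' P' →
      O' ⊆ c₁.extent ∪ {g | g ∉ c₂.extent} → P' ⊆ c₂.intent ∪ {m | m ∉ c₁.intent} →
      O' ⊆ O ∧ P' ⊆ P := by
    intro O' P' hcomp hO' hP'
    have hq : (O', P') ∈ Fam := ⟨hcomp, hO', hP'⟩
    exact ⟨Set.subset_biUnion_of_mem (u := fun q => q.1) hq,
      Set.subset_biUnion_of_mem (u := fun q => q.2) hq⟩
  refine ⟨fun c d => ∀ θ'' : Concept G M I → Concept G M I → Prop,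
      IsCompleteCongruence I θ'' → θ'' c₁ c₂ → θ'' c d,
    ⟨⟨?_, ?_⟩, ?_⟩, ?_, O, P, hOP, hOsub, hPsub, hmax, ?_⟩
  · -- Equivalence
    exact ⟨fun c θ'' h _ => h.1.refl c,
      fun hcd θ'' h h12 => h.1.symm (hcd θ'' h h12),
      fun h h' θ'' hh h12 => hh.1.trans (h θ'' hh h12) (h' θ'' hh h12)⟩
  · -- sup/inf compatibility
    intro T hT
    constructor <;> intro θ'' hθ'' h12
    · exact (hθ''.2 T fun p hp => hT p hp θ'' hθ'' h12).1
    · exact (hθ''.2 T fun p hp => hT p hp θ'' hθ'' h12).2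
  · -- collapses the interval
    intro c hcc d hdd θ'' hθ'' h12
    have h1 : θ'' c c₂ := by
      have h := (Impl19.cong_two hθ'' h12 (hθ''.1.refl c)).1
      rwa [sup_eq_right.2 hcc.1, sup_eq_left.2 hcc.2] at h
    have h2 : θ'' d c₂ := by
      have h := (Impl19.cong_two hθ'' h12 (hθ''.1.refl d)).1
      rwa [sup_eq_right.2 hdd.1, sup_eq_left.2 hdd.2] at h
    exact hθ''.1.trans h1 (hθ''.1.symm h2)
  · -- finest
    intro θ'' hθ'' hIcc c d h
    exact h θ'' hθ'' (hIcc c₁ ⟨le_refl c₁, hc⟩ c₂ ⟨hc, le_refl c₂⟩)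
  · -- θ ↔ congOf
    intro c d
    constructor
    · intro h
      exact h (congOf I O P) (Impl19.congOf_cong hOP) (Impl19.congOf_c12 hc hOsub hPsub)
    · intro hcd θ'' hθ'' h12
      have hq : (Impl19.Hset θ'', Impl19.Nset θ'') ∈ Fam :=
        ⟨Impl19.HN_compatible hθ'', Impl19.H_constraint hθ'' h12,
          Impl19.N_constraint hθ'' h12⟩
      have hHO : Impl19.Hset θ'' ⊆ O := Set.subset_biUnion_of_mem (u := fun q => q.1) hq
      have htr : c.extent ∩ Impl19.Hset θ'' = d.extent ∩ Impl19.Hset θ'' := by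
        have e : ∀ x : Concept G M I,
            x.extent ∩ Impl19.Hset θ'' = (x.extent ∩ O) ∩ Impl19.Hset θ'' := by
          intro x; ext g
          exact ⟨fun ⟨a, b⟩ => ⟨⟨a, hHO b⟩, b⟩, fun ⟨⟨a, _⟩, b⟩ => ⟨a, b⟩⟩
        rw [e c, e d, hcd.1]
      exact Impl19.trace_theta hθ'' htr
end
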